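/- arXiv:1905.12153 — 4 statements merged into one kernel-verified Lean document; each statement's English description precedes it below -/
import Mathlib

section
/- Let A and B be finite-dimensional C*-algebras and let φ : A → B be a unital injective *-homomorphism that maps minimal projections to minimal projections and reflects unitary conjugacy. Then φ is surjective, i.e. φ is a *-isomorphism of A onto B. -/
/-- `p` is a projection: `p² = p = p*`. -/
def IsProj {A : Type*} [Mul A] [Star A] (p : A) : Prop :=
  p * p = p ∧ star p = p

/-- `p` is a minimal projection: a nonzero projection such that the only
projections `q` with `q * p = q` are `0` and `p`. -/
def IsMinProj {A : Type*} [Ring A] [StarRing A] (p : A) : Prop :=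
  p ≠ 0 ∧ IsProj p ∧ ∀ q : A, IsProj q → q * p = q → q = 0 ∨ q = p

/-- `a` and `b` are unitarily conjugate: `u* a u = b` for some unitary `u`. -/
def UConj {A : Type*} [Ring A] [StarRing A] (a b : A) : Prop :=
  ∃ u ∈ unitary A, star u * a * u = b

open Module

section Aux

/-- Any function is continuous on a finite set. -/
lemma StmtAux.continuousOn_of_finite {α β : Type*} [TopologicalSpace α] [T1Space α]
    [TopologicalSpace β] {s : Set α} (hs : s.Finite) (f : α → β) : ContinuousOn f s := by
  intro x hx
  have hmem : {x} ∈ nhdsWithin x s := by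
    refine mem_nhdsWithin.mpr ⟨(s \ {x})ᶜ, ((hs.subset Set.diff_subset).isClosed).isOpen_compl,
      by simp, ?_⟩
    rintro y ⟨hy1, hy2⟩
    by_contra h
    exact hy1 ⟨hy2, h⟩
  exact (tendsto_pure_nhds f x).mono_left (Filter.le_pure_iff.mpr hmem)

/-- The spectrum of an element of a finite-dimensional algebra is finite. -/
lemma StmtAux.spectrum_finite {R : Type*} [Ring R] [Algebra ℂ R] [FiniteDimensional ℂ R]
    (a : R) : (spectrum ℂ a).Finite := by
  refine (Module.End.finite_spectrum (Algebra.lmul ℂ R a)).subset fun l hl => ?_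
  rw [spectrum.mem_iff] at hl ⊢
  intro hunit
  apply hl
  set c : R := algebraMap ℂ R l - a with hc
  have hmap : algebraMap ℂ (Module.End ℂ R) l - Algebra.lmul ℂ R a = Algebra.lmul ℂ R c := by
    rw [hc, map_sub, AlgHom.commutes]
  rw [hmap] at hunit
  have hbij := (Module.End.isUnit_iff (Algebra.lmul ℂ R c)).mp hunit
  obtain ⟨b, hb⟩ := hbij.2 1
  have hb1 : c * b = 1 := hb
  have hb2 : b * c = 1 := by
    have h0 : Algebra.lmul ℂ R c (b * c - 1) = Algebra.lmul ℂ R c 0 := by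
      show c * (b * c - 1) = c * 0
      rw [mul_sub, mul_one, ← mul_assoc, hb1, one_mul, sub_self, mul_zero]
    have := hbij.1 h0
    rwa [sub_eq_zero] at this
  exact ⟨⟨c, b, hb1, hb2⟩, rfl⟩

lemma StmtAux.smul_cancel {R : Type*} [AddCommGroup R] [Module ℂ R] {c d : ℂ} {x : R}
    (hx : x ≠ 0) (h : c • x = d • x) : c = d := by
  by_contra hcd
  have h2 : (c - d) • x = 0 := by rw [sub_smul, h, sub_self]
  apply hx
  have h3 : x = (c - d)⁻¹ • ((c - d) • x) := by
    rw [smul_smul, inv_mul_cancel₀ (sub_ne_zero.mpr hcd), one_smul]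
  rw [h3, h2, smul_zero]

/-- The corner subspace `pRq`. -/
def StmtAux.corner {R : Type*} [Ring R] [Algebra ℂ R] (p q : R) : Submodule ℂ R where
  carrier := {x | p * x * q = x}
  add_mem' := by
    intro a b ha hb
    simp only [Set.mem_setOf_eq] at *
    rw [mul_add, add_mul, ha, hb]
  zero_mem' := by simp
  smul_mem' := by
    intro c x hx
    simp only [Set.mem_setOf_eq] at *
    rw [mul_smul_comm, smul_mul_assoc, hx]

lemma StmtAux.mem_corner {R : Type*} [Ring R] [Algebra ℂ R] {p q x : R} :
    x ∈ StmtAux.corner p q ↔ p * x * q = x := Iff.rfl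

end Aux

namespace StmtAux

section CStar

variable {R : Type*} [CStarAlgebra R] [FiniteDimensional ℂ R]

/-- Selfadjoint elements of a minimal corner are scalar multiples of the projection. -/
lemma corner_scalar_selfAdjoint {p y : R} (hp : IsMinProj p) (hy : IsSelfAdjoint y)
    (hc : p * y * p = y) : ∃ c : ℂ, y = c • p := by
  haveI : IsStarNormal y := hy.isStarNormal
  have hfin := StmtAux.spectrum_finite y
  set s : Finset ℂ := hfin.toFinset with hs
  have hcont : ∀ f : ℂ → ℂ, ContinuousOn f (spectrum ℂ y) :=
    fun f => StmtAux.continuousOn_of_finite hfin f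
  set Q : ℂ → R := fun l => cfc (fun z : ℂ => if z = l then (1 : ℂ) else 0) y with hQ
  -- the spectral projections sum to one
  have hsum : ∑ l ∈ s, Q l = 1 := by
    have h1 := cfc_sum (fun l (z : ℂ) => if z = l then (1 : ℂ) else 0) y s
      (fun i _ => hcont _)
    have h2 : cfc (∑ l ∈ s, fun z : ℂ => if z = l then (1 : ℂ) else 0) y
        = cfc (1 : ℂ → ℂ) y := by
      apply cfc_congr
      intro z hz
      simp only [Finset.sum_apply, Pi.one_apply]
      rw [Finset.sum_ite_eq s z (fun _ => (1 : ℂ))]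
      simp [hs, hfin.mem_toFinset, hz]
    rw [← h1, h2, cfc_one ℂ y]
  -- each Q l is a projection
  have hproj : ∀ l : ℂ, IsProj (Q l) := by
    intro l
    have hmul := cfc_mul (fun z : ℂ => if z = l then (1 : ℂ) else 0)
      (fun z : ℂ => if z = l then (1 : ℂ) else 0) y (hcont _) (hcont _)
    have hstar := cfc_star (fun z : ℂ => if z = l then (1 : ℂ) else 0) y
    constructor
    · simp only [hQ]
      rw [← hmul]
      apply cfc_congr
      intro z _
      by_cases h : z = l <;> simp [h]
    · simp only [hQ]
      rw [← hstar]
      apply cfc_congr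
      intro z _
      by_cases h : z = l <;> simp [h]
  -- y acts as the scalar l on Q l
  have hyQ : ∀ l : ℂ, y * Q l = l • Q l := by
    intro l
    have hmul := cfc_mul (fun z : ℂ => z)
      (fun z : ℂ => if z = l then (1 : ℂ) else 0) y (hcont _) (hcont _)
    rw [cfc_id' ℂ y] at hmul
    have h2 : cfc (fun z : ℂ => z * (if z = l then (1 : ℂ) else 0)) y
        = cfc (fun z : ℂ => l * (if z = l then (1 : ℂ) else 0)) y := by
      apply cfc_congr
      intro z _
      by_cases h : z = l <;> simp [h]
    simp only [hQ]
    rw [← hmul, h2, cfc_const_mul l _ y (hcont _)]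
  -- Q l lies in the corner, for l ≠ 0
  have hycorner : y * p = y ∧ p * y = y := by
    constructor
    · conv_lhs => rw [← hc]
      rw [mul_assoc, mul_assoc, hp.2.1.1, ← mul_assoc]
      exact hc
    · conv_lhs => rw [← hc]
      rw [← mul_assoc, ← mul_assoc, hp.2.1.1]
      exact hc
  have hQcorner : ∀ l : ℂ, l ≠ 0 → Q l * p = Q l := by
    intro l hl
    have hmul := cfc_mul (fun z : ℂ => l⁻¹ * (if z = l then (1 : ℂ) else 0))
      (fun z : ℂ => z) y (hcont _) (hcont _)
    rw [cfc_id' ℂ y] at hmul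
    have hfact : Q l = cfc (fun z : ℂ =>
        (l⁻¹ * (if z = l then (1 : ℂ) else 0)) * z) y := by
      simp only [hQ]
      apply cfc_congr
      intro z _
      by_cases h : z = l
      · simp [h, inv_mul_cancel₀ hl]
      · simp [h]
    have h2 : Q l = cfc (fun z : ℂ => l⁻¹ * (if z = l then (1 : ℂ) else 0)) y * y := by
      rw [hfact, hmul]
    rw [h2, mul_assoc, hycorner.1]
  -- conclude : y is in the span of p
  have hymem : y ∈ (Submodule.span ℂ {p} : Submodule ℂ R) := by
    have hy1 : y = ∑ l ∈ s, l • Q l := by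
      calc y = y * 1 := (mul_one y).symm
        _ = y * ∑ l ∈ s, Q l := by rw [hsum]
        _ = ∑ l ∈ s, y * Q l := by rw [Finset.mul_sum]
        _ = ∑ l ∈ s, l • Q l := Finset.sum_congr rfl fun l _ => hyQ l
    rw [hy1]
    apply Submodule.sum_mem
    intro l _
    by_cases hl : l = 0
    · simp [hl]
    · rcases hp.2.2 (Q l) (hproj l) (hQcorner l hl) with h | h
      · simp [h]
      · rw [h]
        exact Submodule.smul_mem _ _ (Submodule.mem_span_singleton_self p)
  obtain ⟨c, hcy⟩ := Submodule.mem_span_singleton.mp hymem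
  exact ⟨c, hcy.symm⟩

/-- Every element of a minimal corner is a scalar multiple of the projection. -/
lemma corner_scalar {p x : R} (hp : IsMinProj p) (hc : p * x * p = x) :
    ∃ c : ℂ, x = c • p := by
  have hstarc : p * star x * p = star x := by
    have h := congrArg star hc
    rw [star_mul, star_mul, hp.2.1.2] at h
    rw [← mul_assoc] at h
    exact h
  set y1 : R := (2 : ℂ)⁻¹ • (x + star x) with hy1
  set y2 : R := (2 * Complex.I)⁻¹ • (x - star x) with hy2
  have hsa1 : IsSelfAdjoint y1 := by
    rw [hy1, IsSelfAdjoint, star_smul, star_add, star_star]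
    rw [show star ((2 : ℂ)⁻¹) = (2 : ℂ)⁻¹ by
      rw [Complex.star_def, map_inv₀, Complex.conj_ofNat]]
    rw [add_comm]
  have hsa2 : IsSelfAdjoint y2 := by
    rw [hy2, IsSelfAdjoint, star_smul, star_sub, star_star]
    have h1 : star ((2 * Complex.I)⁻¹) = -(2 * Complex.I)⁻¹ := by
      simp [Complex.star_def, mul_comm]
    rw [h1, neg_smul, ← smul_neg, neg_sub]
  have hc1 : p * y1 * p = y1 := by
    rw [hy1, mul_smul_comm, smul_mul_assoc, mul_add, add_mul, hc, hstarc]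
  have hc2 : p * y2 * p = y2 := by
    rw [hy2, mul_smul_comm, smul_mul_assoc, mul_sub, sub_mul, hc, hstarc]
  obtain ⟨c1, hc1'⟩ := corner_scalar_selfAdjoint hp hsa1 hc1
  obtain ⟨c2, hc2'⟩ := corner_scalar_selfAdjoint hp hsa2 hc2
  refine ⟨c1 + Complex.I * c2, ?_⟩
  have hx12 : x = y1 + Complex.I • y2 := by
    rw [hy1, hy2, smul_smul]
    have h2 : Complex.I * (2 * Complex.I)⁻¹ = (2 : ℂ)⁻¹ := by
      rw [mul_inv, ← mul_assoc, mul_comm Complex.I, mul_assoc, mul_inv_cancel₀ Complex.I_ne_zero,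
        mul_one]
    rw [h2, ← smul_add]
    have : x + star x + (x - star x) = (2 : ℂ) • x := by
      rw [two_smul]
      abel
    rw [this, smul_smul, inv_mul_cancel₀ (two_ne_zero), one_smul]
  rw [hx12, hc1', hc2', smul_smul, ← add_smul]

lemma isProj_one : IsProj (1 : R) := ⟨one_mul 1, star_one R⟩

lemma corner_eq_span {p : R} (hp : IsMinProj p) :
    corner p p = (Submodule.span ℂ {p} : Submodule ℂ R) := by
  apply le_antisymm
  · intro x hx
    obtain ⟨c, hc⟩ := corner_scalar hp hx
    rw [hc]
    exact Submodule.smul_mem _ _ (Submodule.mem_span_singleton_self p)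
  · rw [Submodule.span_le, Set.singleton_subset_iff]
    show p * p * p = p
    rw [hp.2.1.1, hp.2.1.1]

lemma finrank_corner_self {p : R} (hp : IsMinProj p) :
    finrank ℂ (corner p p) = 1 := by
  rw [corner_eq_span hp]
  exact finrank_span_singleton hp.1

/-- A nonzero projection has positive-dimensional corner. -/
lemma corner_pos {p : R} (hp : IsProj p) (hp0 : p ≠ 0) :
    1 ≤ finrank ℂ (corner p p) := by
  have hmem : p ∈ corner p p := by
    show p * p * p = p
    rw [hp.1, hp.1]
  have hle : (Submodule.span ℂ {p} : Submodule ℂ R) ≤ corner p p := by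
    rw [Submodule.span_le, Set.singleton_subset_iff]; exact hmem
  calc 1 = finrank ℂ (Submodule.span ℂ {p} : Submodule ℂ R) :=
        (finrank_span_singleton hp0).symm
    _ ≤ finrank ℂ (corner p p) := Submodule.finrank_mono hle

/-- Every nonzero projection dominates a minimal projection. -/
lemma exists_minProj_le (N : ℕ) :
    ∀ p : R, finrank ℂ (corner p p) ≤ N → IsProj p → p ≠ 0 →
    ∃ q : R, IsMinProj q ∧ q * p = q := by
  induction N with
  | zero =>
    intro p hN hp hp0
    have := corner_pos hp hp0
    omega
  | succ N ih =>
    intro p hN hp hp0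
    by_cases hm : IsMinProj p
    · exact ⟨p, hm, hp.1⟩
    · have hex : ∃ q : R, IsProj q ∧ q * p = q ∧ q ≠ 0 ∧ q ≠ p := by
        unfold IsMinProj at hm
        push_neg at hm
        exact hm hp0 hp
      obtain ⟨q, hq, hqp, hq0, hqne⟩ := hex
      have hpq : p * q = q := by
        have h := congrArg star hqp
        rwa [star_mul, hp.2, hq.2] at h
      have hle : corner q q ≤ corner p p := by
        intro x hx
        have hx' : q * x * q = x := hx
        show p * x * p = x
        conv_lhs => rw [← hx']
        rw [show p * (q * x * q) * p = (p * q) * x * (q * p) by noncomm_ring, hpq, hqp, hx']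
      have hmemp : p ∈ corner p p := by
        show p * p * p = p
        rw [hp.1, hp.1]
      have hnot : p ∉ corner q q := by
        intro hmem'
        have h : q * p * q = p := hmem'
        rw [hqp, hq.1] at h
        exact hqne h
      have hlt : corner q q < corner p p :=
        lt_of_le_of_ne hle fun heq => hnot (by rw [heq]; exact hmemp)
      have hrank := Submodule.finrank_lt_finrank_of_lt hlt
      obtain ⟨r, hr, hrq⟩ := ih q (by omega) hq hq0
      refine ⟨r, hr, ?_⟩
      calc r * p = (r * q) * p := by rw [hrq]
        _ = r * (q * p) := by rw [mul_assoc]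
        _ = r * q := by rw [hqp]
        _ = r := hrq

/-- Every projection decomposes as a finite sum of pairwise orthogonal minimal projections. -/
lemma exists_minProj_decomp (N : ℕ) :
    ∀ p : R, finrank ℂ (corner p p) ≤ N → IsProj p →
    ∃ (n : ℕ) (e : Fin n → R), (∀ i, IsMinProj (e i)) ∧
      (∀ i j, i ≠ j → e i * e j = 0) ∧ (∀ i, e i * p = e i) ∧ ∑ i, e i = p := by
  induction N with
  | zero =>
    intro p hN hp
    by_cases hp0 : p = 0
    · exact ⟨0, Fin.elim0, fun i => i.elim0, fun i => i.elim0, fun i => i.elim0, by simp [hp0]⟩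
    · exact absurd hN (by have := corner_pos hp hp0; omega)
  | succ N ih =>
    intro p hN hp
    by_cases hp0 : p = 0
    · exact ⟨0, Fin.elim0, fun i => i.elim0, fun i => i.elim0, fun i => i.elim0, by simp [hp0]⟩
    obtain ⟨q, hq, hqp⟩ := exists_minProj_le (N + 1) p hN hp hp0
    have hpq : p * q = q := by
      have h := congrArg star hqp
      rwa [star_mul, hp.2, hq.2.1.2] at h
    set p' : R := p - q with hp'
    have hp'proj : IsProj p' := by
      constructor
      · rw [hp', sub_mul, mul_sub, mul_sub, hp.1, hpq, hqp, hq.2.1.1]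
        abel
      · rw [hp', star_sub, hp.2, hq.2.1.2]
    have hqp' : q * p' = 0 := by rw [hp', mul_sub, hqp, hq.2.1.1, sub_self]
    have hp'q : p' * q = 0 := by rw [hp', sub_mul, hpq, hq.2.1.1, sub_self]
    have hpp' : p * p' = p' := by rw [hp', mul_sub, hp.1, hpq]
    have hp'p : p' * p = p' := by rw [hp', sub_mul, hp.1, hqp]
    have hle : corner p' p' ≤ corner p p := by
      intro x hx
      have hx' : p' * x * p' = x := hx
      show p * x * p = x
      conv_lhs => rw [← hx']
      rw [show p * (p' * x * p') * p = (p * p') * x * (p' * p) by noncomm_ring, hpp', hp'p, hx']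
    have hqmem : q ∈ corner p p := by
      show p * q * p = q
      rw [hpq, hqp]
    have hqnot : q ∉ corner p' p' := by
      intro hmem
      have h : p' * q * p' = q := hmem
      rw [hp'q, zero_mul] at h
      exact hq.1 h.symm
    have hlt : corner p' p' < corner p p :=
      lt_of_le_of_ne hle fun heq => hqnot (by rw [heq]; exact hqmem)
    have hrank := Submodule.finrank_lt_finrank_of_lt hlt
    obtain ⟨n, e, hmin, horth, hbelow, hsum⟩ := ih p' (by omega) hp'proj
    have horthq : ∀ i, e i * q = 0 := by
      intro i
      calc e i * q = (e i * p') * q := by rw [hbelow i]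
        _ = e i * (p' * q) := by rw [mul_assoc]
        _ = 0 := by rw [hp'q, mul_zero]
    have hqorth : ∀ i, q * e i = 0 := by
      intro i
      have h2 : star (e i * q) = q * e i := by
        rw [star_mul, hq.2.1.2, (hmin i).2.1.2]
      rw [← h2, horthq i, star_zero]
    refine ⟨n + 1, Fin.cons q e, ?_, ?_, ?_, ?_⟩
    · intro i
      induction i using Fin.cases with
      | zero => simpa using hq
      | succ j => simpa using hmin j
    · intro i j hij
      induction i using Fin.cases with
      | zero =>
        induction j using Fin.cases with
        | zero => exact absurd rfl hij
        | succ j => simpa using hqorth j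
      | succ i =>
        induction j using Fin.cases with
        | zero => simpa using horthq i
        | succ j =>
          simp only [Fin.cons_succ]
          exact horth i j fun h => hij (by rw [h])
    · intro i
      induction i using Fin.cases with
      | zero => simpa using hqp
      | succ j =>
        simp only [Fin.cons_succ]
        calc e j * p = (e j * p') * p := by rw [hbelow j]
          _ = e j * (p' * p) := by rw [mul_assoc]
          _ = e j * p' := by rw [hp'p]
          _ = e j := hbelow j
    · rw [Fin.sum_cons, hsum, hp']
      abel

end CStar

lemma corner_absorb {R : Type*} [Ring R] {p q x : R} (hp : p * p = p) (hq : q * q = q)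
    (hx : p * x * q = x) : p * x = x ∧ x * q = x := by
  constructor
  · conv_lhs => rw [← hx]
    rw [show p * (p * x * q) = (p * p) * x * q by noncomm_ring, hp]
    exact hx
  · conv_lhs => rw [← hx]
    rw [mul_assoc (p * x) q q, hq]
    exact hx

section CStar2

variable {R : Type*} [CStarAlgebra R] [FiniteDimensional ℂ R]

/-- A nonzero element of a corner between minimal projections yields a partial isometry. -/
lemma exists_partial_isometry {p q x : R} (hp : IsMinProj p) (hq : IsMinProj q)
    (hx : p * x * q = x) (hx0 : x ≠ 0) :
    ∃ v : R, p * v * q = v ∧ star v * v = q ∧ v * star v = p := by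
  obtain ⟨hpx, hxq⟩ := corner_absorb hp.2.1.1 hq.2.1.1 hx
  have hsxp : star x * p = star x := by
    have h := congrArg star hpx
    rwa [star_mul, hp.2.1.2] at h
  have hqsx : q * star x = star x := by
    have h := congrArg star hxq
    rwa [star_mul, hq.2.1.2] at h
  have hmem : q * (star x * x) * q = star x * x := by
    rw [show q * (star x * x) * q = (q * star x) * (x * q) by noncomm_ring, hqsx, hxq]
  obtain ⟨c, hc⟩ := corner_scalar hq hmem
  have hxx0 : star x * x ≠ 0 := fun h => hx0 ((CStarRing.star_mul_self_eq_zero_iff x).mp h)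
  have hc0 : c ≠ 0 := fun h => hxx0 (by rw [hc, h, zero_smul])
  -- `c` belongs to the spectrum of `star x * x`
  have hcmem : c ∈ spectrum ℂ (star x * x) := by
    rw [spectrum.mem_iff]
    intro hunit
    have heq : algebraMap ℂ R c - star x * x = c • ((1 : R) - q) := by
      rw [Algebra.algebraMap_eq_smul_one, hc, smul_sub]
    rw [heq] at hunit
    obtain ⟨u, hu⟩ := hunit
    have h1 : (↑u⁻¹ : R) * ↑u = 1 := u.inv_mul
    rw [hu] at h1
    have h2 : ((1 : R) - q) * q = 0 := by rw [sub_mul, one_mul, hq.2.1.1, sub_self]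
    have h3 : q = 0 := by
      calc q = ((↑u⁻¹ : R) * (c • ((1 : R) - q))) * q := by rw [h1, one_mul]
        _ = (↑u⁻¹ : R) * (c • (((1 : R) - q) * q)) := by
            rw [mul_assoc, smul_mul_assoc]
        _ = 0 := by rw [h2, smul_zero, mul_zero]
    exact hq.1 h3
  -- `c` is a nonnegative real number
  have hcreal : star c = c := by
    have hsa : star (star x * x) = star x * x := by rw [star_mul, star_star]
    rw [hc, star_smul, hq.2.1.2] at hsa
    exact smul_cancel hq.1 hsa
  have hcr : ((c.re : ℝ) : ℂ) = c := by
    have h := Complex.conj_eq_iff_re.mp hcreal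
    exact h
  set r : ℝ := c.re with hr
  have hrmem : r ∈ spectrum ℝ (star x * x) := by
    apply spectrum.of_algebraMap_mem ℂ
    show ((r : ℝ) : ℂ) ∈ spectrum ℂ (star x * x)
    rw [hcr]
    exact hcmem
  have hrnonneg : 0 ≤ r := spectrum_star_mul_self_nonneg r hrmem
  have hrpos : 0 < r := by
    rcases lt_or_eq_of_le hrnonneg with h | h
    · exact h
    · exact absurd (by rw [← hcr, ← h, Complex.ofReal_zero]) hc0
  set t : ℝ := Real.sqrt r with ht
  have htpos : 0 < t := Real.sqrt_pos.mpr hrpos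
  have ht0 : ((t : ℝ) : ℂ) ≠ 0 := by
    simpa using htpos.ne'
  set v : R := (((t : ℝ) : ℂ))⁻¹ • x with hv
  have hvcorner : p * v * q = v := by
    rw [hv, mul_smul_comm, smul_mul_assoc, hx]
  have hcoef : star (((t : ℝ) : ℂ))⁻¹ * (((t : ℝ) : ℂ))⁻¹ * c = 1 := by
    rw [← hcr]
    rw [star_inv₀, show star ((t : ℝ) : ℂ) = ((t : ℝ) : ℂ) by
      rw [Complex.star_def, Complex.conj_ofReal]]
    rw [← mul_inv]
    norm_cast
    rw [ht, Real.mul_self_sqrt hrpos.le, inv_mul_cancel₀ hrpos.ne']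
  have hvv : star v * v = q := by
    rw [hv, star_smul, smul_mul_assoc, mul_smul_comm, smul_smul, hc, smul_smul, hcoef, one_smul]
  have hv0 : v ≠ 0 := by
    rw [hv]
    intro h
    apply hx0
    have h2 := congrArg (fun z : R => ((t : ℝ) : ℂ) • z) h
    simpa [smul_smul, mul_inv_cancel₀ ht0] using h2
  obtain ⟨hpv, hvq⟩ := corner_absorb hp.2.1.1 hq.2.1.1 hvcorner
  have hsvp : star v * p = star v := by
    have h := congrArg star hpv
    rwa [star_mul, hp.2.1.2] at h
  have hvmem : p * (v * star v) * p = v * star v := by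
    rw [show p * (v * star v) * p = (p * v) * (star v * p) by noncomm_ring, hpv, hsvp]
  obtain ⟨d, hd⟩ := corner_scalar hp hvmem
  have hidem : (v * star v) * (v * star v) = v * star v := by
    rw [show (v * star v) * (v * star v) = v * (star v * v) * star v by noncomm_ring, hvv]
    rw [show v * q * star v = (v * q) * star v from rfl, hvq]
  have hd2 : (d * d) • p = d • p := by
    calc (d * d) • p = (d * d) • (p * p) := by rw [hp.2.1.1]
      _ = (d • p) * (d • p) := by rw [smul_mul_smul_comm]
      _ = (v * star v) * (v * star v) := by rw [← hd]
      _ = v * star v := hidem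
      _ = d • p := hd
  have hdd : d * d = d := smul_cancel hp.1 hd2
  have hd1 : d = 1 := by
    by_cases hdz : d = 0
    · exfalso
      have hz : v * star v = 0 := by rw [hd, hdz, zero_smul]
      have h3 : star (star v) * star v = 0 := by rwa [star_star]
      have h2 : star v = 0 := (CStarRing.star_mul_self_eq_zero_iff (star v)).mp h3
      apply hv0
      simpa using congrArg star h2
    · exact mul_left_cancel₀ hdz (by rw [hdd, mul_one])
  exact ⟨v, hvcorner, hvv, by rw [hd, hd1, one_smul]⟩

/-- Orthogonal minimal projections linked by a nonzero corner element are
unitarily conjugate. -/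
lemma uconj_of_corner {p q : R} (hp : IsMinProj p) (hq : IsMinProj q)
    (hpq : p * q = 0) {x : R} (hx : p * x * q = x) (hx0 : x ≠ 0) : UConj p q := by
  obtain ⟨v, hvc, hvv, hvw⟩ := exists_partial_isometry hp hq hx hx0
  have hqp : q * p = 0 := by
    have h := congrArg star hpq
    rwa [star_mul, hp.2.1.2, hq.2.1.2, star_zero] at h
  obtain ⟨hpv, hvq⟩ := corner_absorb hp.2.1.1 hq.2.1.1 hvc
  have hvp : v * p = 0 := by
    calc v * p = (p * v * q) * p := by rw [hvc]
      _ = (p * v) * (q * p) := by noncomm_ring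
      _ = 0 := by rw [hqp, mul_zero]
  have hqv : q * v = 0 := by
    calc q * v = q * (p * v * q) := by rw [hvc]
      _ = (q * p) * (v * q) := by noncomm_ring
      _ = 0 := by rw [hqp, zero_mul]
  have hsvp : star v * p = star v := by
    have h := congrArg star hpv; rwa [star_mul, hp.2.1.2] at h
  have hpsv : p * star v = 0 := by
    have h := congrArg star hvp; rwa [star_mul, hp.2.1.2, star_zero] at h
  have hsvq : star v * q = 0 := by
    have h := congrArg star hqv; rwa [star_mul, hq.2.1.2, star_zero] at h
  have hqsv : q * star v = star v := by
    have h := congrArg star hvq; rwa [star_mul, hq.2.1.2] at h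
  have hvv2 : v * v = 0 := by
    calc v * v = v * (p * v * q) := by rw [hvc]
      _ = (v * p) * (v * q) := by noncomm_ring
      _ = 0 := by rw [hvp, zero_mul]
  have hss : star v * star v = 0 := by
    have h := congrArg star hvv2; rwa [star_mul, star_zero] at h
  set w : R := 1 - p - q with hw
  have hwstar : star w = w := by
    rw [hw, star_sub, star_sub, star_one, hp.2.1.2, hq.2.1.2]
  have hvw0 : v * w = 0 := by
    rw [hw, mul_sub, mul_sub, mul_one, hvp, hvq, sub_zero, sub_self]
  have hwv : w * v = 0 := by
    rw [hw, sub_mul, sub_mul, one_mul, hpv, hqv, sub_zero, sub_self]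
  have hsvw : star v * w = 0 := by
    rw [hw, mul_sub, mul_sub, mul_one, hsvp, hsvq, sub_zero, sub_self]
  have hwsv : w * star v = 0 := by
    rw [hw, sub_mul, sub_mul, one_mul, hpsv, hqsv, sub_zero, sub_self]
  have hww : w * w = w := by
    rw [hw, sub_mul, sub_mul, one_mul, mul_sub, mul_sub, mul_one, mul_sub, mul_sub, mul_one,
      hp.2.1.1, hq.2.1.1, hpq, hqp]
    abel
  set u : R := v + star v + w with hu
  have hustar : star u = u := by
    rw [hu, star_add, star_add, star_star, hwstar]
    abel
  have huu : u * u = 1 := by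
    have hexp : u * u = v * v + v * star v + v * w + (star v * v + star v * star v
        + star v * w) + (w * v + w * star v + w * w) := by
      rw [hu]; noncomm_ring
    rw [hexp, hvv2, hvw0, hss, hsvw, hwv, hwsv, hww, hvw, hvv, hw]
    abel
  have humem : u ∈ unitary R := by
    rw [Unitary.mem_iff, hustar]
    exact ⟨huu, huu⟩
  refine ⟨u, humem, ?_⟩
  have hpu : u * p = star v := by
    rw [hu, add_mul, add_mul, hvp, hsvp]
    have hwp : w * p = 0 := by
      rw [hw, sub_mul, sub_mul, one_mul, hp.2.1.1, hqp, sub_zero, sub_self]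
    rw [hwp, add_zero, zero_add]
  have hsvu : star v * u = q := by
    rw [hu, mul_add, mul_add, hvv, hss, hsvw, add_zero, add_zero]
  calc star u * p * u = (u * p) * u := by rw [hustar]
    _ = star v * u := by rw [hpu]
    _ = q := hsvu

/-- Corners between minimal projections are at most one-dimensional. -/
lemma finrank_corner_le_one {p q : R} (hp : IsMinProj p) (hq : IsMinProj q) :
    finrank ℂ (corner p q) ≤ 1 := by
  by_cases hbot : corner p q = (⊥ : Submodule ℂ R)
  · rw [hbot, finrank_bot]
    omega
  · obtain ⟨x, hxmem, hx0⟩ := (Submodule.ne_bot_iff _).mp hbot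
    obtain ⟨v, hvc, hvv, hvw⟩ := exists_partial_isometry hp hq hxmem hx0
    have hv0 : v ≠ 0 := fun h => hp.1 (by rw [← hvw, h, zero_mul])
    obtain ⟨hpv, hvq⟩ := corner_absorb hp.2.1.1 hq.2.1.1 hvc
    have hqsv : q * star v = star v := by
      have h := congrArg star hvq; rwa [star_mul, hq.2.1.2] at h
    have hle : corner p q ≤ Submodule.span ℂ {v} := by
      intro y hy
      have hy' : p * y * q = y := hy
      obtain ⟨hpy, hyq⟩ := corner_absorb hp.2.1.1 hq.2.1.1 hy'
      have hmemq : q * (star v * y) * q = star v * y := by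
        rw [show q * (star v * y) * q = (q * star v) * (y * q) by noncomm_ring, hqsv, hyq]
      obtain ⟨m, hm⟩ := corner_scalar hq hmemq
      have hyv : y = m • v := by
        calc y = p * y := hpy.symm
          _ = (v * star v) * y := by rw [hvw]
          _ = v * (star v * y) := by rw [mul_assoc]
          _ = v * (m • q) := by rw [hm]
          _ = m • (v * q) := by rw [mul_smul_comm]
          _ = m • v := by rw [hvq]
      rw [hyv]
      exact Submodule.smul_mem _ _ (Submodule.mem_span_singleton_self v)
    calc finrank ℂ (corner p q) ≤ finrank ℂ (Submodule.span ℂ {v}) :=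
          Submodule.finrank_mono hle
      _ = 1 := finrank_span_singleton hv0

end CStar2

/-- The dimension of an algebra is the sum of the dimensions of the corners coming from an
orthogonal decomposition of the unit into projections. -/
lemma finrank_eq_sum_corners {R : Type*} [Ring R] [Algebra ℂ R] [FiniteDimensional ℂ R]
    {n : ℕ} (e : Fin n → R) (hproj : ∀ i, e i * e i = e i)
    (horth : ∀ i j, i ≠ j → e i * e j = 0) (hsum : ∑ i, e i = 1) :
    finrank ℂ R = ∑ ij : Fin n × Fin n, finrank ℂ (corner (e ij.1) (e ij.2)) := by
  let L : R →ₗ[ℂ] ((ij : Fin n × Fin n) → corner (e ij.1) (e ij.2)) :=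
    { toFun := fun x ij => ⟨e ij.1 * x * e ij.2, by
        show e ij.1 * (e ij.1 * x * e ij.2) * e ij.2 = e ij.1 * x * e ij.2
        rw [show e ij.1 * (e ij.1 * x * e ij.2) * e ij.2
            = (e ij.1 * e ij.1) * x * (e ij.2 * e ij.2) by noncomm_ring, hproj, hproj]⟩
      map_add' := by
        intro a b
        funext ij
        apply Subtype.ext
        show e ij.1 * (a + b) * e ij.2 = e ij.1 * a * e ij.2 + e ij.1 * b * e ij.2
        rw [mul_add, add_mul]
      map_smul' := by
        intro c a
        funext ij
        apply Subtype.ext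
        show e ij.1 * (c • a) * e ij.2 = c • (e ij.1 * a * e ij.2)
        rw [mul_smul_comm, smul_mul_assoc] }
  have hLinj : Function.Injective L := by
    rw [injective_iff_map_eq_zero]
    intro x hx
    have hx' : ∀ ij : Fin n × Fin n, e ij.1 * x * e ij.2 = 0 := by
      intro ij
      exact Subtype.ext_iff.mp (congrFun hx ij)
    calc x = (∑ i, e i) * x * (∑ j, e j) := by rw [hsum, one_mul, mul_one]
      _ = ∑ i, ∑ j, e i * x * e j := by
          rw [Finset.sum_mul, Finset.sum_mul]
          apply Finset.sum_congr rfl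
          intro i _
          rw [Finset.mul_sum]
      _ = 0 := by
          apply Finset.sum_eq_zero
          intro i _
          apply Finset.sum_eq_zero
          intro j _
          exact hx' (i, j)
  have hLsurj : Function.Surjective L := by
    intro w
    refine ⟨∑ ij : Fin n × Fin n, (w ij : R), ?_⟩
    funext kl
    apply Subtype.ext
    show e kl.1 * (∑ ij : Fin n × Fin n, (w ij : R)) * e kl.2 = (w kl : R)
    rw [Finset.mul_sum, Finset.sum_mul]
    rw [Finset.sum_eq_single kl]
    · exact (w kl).2
    · intro ij _ hne
      have hmem : e ij.1 * (w ij : R) * e ij.2 = (w ij : R) := (w ij).2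
      have hgroup : e kl.1 * (w ij : R) * e kl.2
          = (e kl.1 * e ij.1) * (w ij : R) * (e ij.2 * e kl.2) := by
        conv_lhs => rw [← hmem]
        noncomm_ring
      by_cases h1 : ij.2 = kl.2
      · have h2 : ij.1 ≠ kl.1 := fun h => hne (Prod.ext h h1)
        rw [hgroup, horth kl.1 ij.1 (Ne.symm h2), zero_mul, zero_mul]
      · rw [hgroup, horth ij.2 kl.2 h1, mul_zero]
    · intro hkl
      exact absurd (Finset.mem_univ kl) hkl
  have E := LinearEquiv.ofBijective L ⟨hLinj, hLsurj⟩
  rw [LinearEquiv.finrank_eq E, Module.finrank_pi_fintype ℂ]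

end StmtAux

open StmtAux

theorem stmt0 {A B : Type*}
    [NormedRing A] [StarRing A] [CStarRing A] [NormedAlgebra ℂ A] [StarModule ℂ A]
    [FiniteDimensional ℂ A]
    [NormedRing B] [StarRing B] [CStarRing B] [NormedAlgebra ℂ B] [StarModule ℂ B]
    [FiniteDimensional ℂ B]
    (φ : A →⋆ₐ[ℂ] B) (hinj : Function.Injective φ)
    (hmin : ∀ p : A, IsMinProj p → IsMinProj (φ p))
    (hconj : ∀ a b : A, UConj (φ a) (φ b) → UConj a b) :
    Function.Surjective φ := by
  haveI : CompleteSpace A := FiniteDimensional.complete ℂ A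
  haveI : CompleteSpace B := FiniteDimensional.complete ℂ B
  letI : CStarAlgebra A :=
    { toNormedRing := inferInstance
      toStarRing := inferInstance
      toCompleteSpace := inferInstance
      toCStarRing := inferInstance
      toNormedAlgebra := inferInstance
      toStarModule := inferInstance }
  letI : CStarAlgebra B :=
    { toNormedRing := inferInstance
      toStarRing := inferInstance
      toCompleteSpace := inferInstance
      toCStarRing := inferInstance
      toNormedAlgebra := inferInstance
      toStarModule := inferInstance }
  rcases subsingleton_or_nontrivial B with hB | hB
  · exact fun b => ⟨0, Subsingleton.elim _ _⟩
  haveI : Nontrivial A := by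
    refine ⟨1, 0, fun h => ?_⟩
    apply (one_ne_zero : (1 : B) ≠ 0)
    rw [← map_one φ, h, map_zero]
  obtain ⟨n, e, hmine, horthe, -, hsume⟩ :=
    exists_minProj_decomp (finrank ℂ (corner (1 : A) (1 : A))) 1 le_rfl isProj_one
  set f : Fin n → B := fun i => φ (e i) with hf
  have hminf : ∀ i, IsMinProj (f i) := fun i => hmin _ (hmine i)
  have horthf : ∀ i j, i ≠ j → f i * f j = 0 := by
    intro i j hij
    rw [hf]
    show φ (e i) * φ (e j) = 0
    rw [← map_mul, horthe i j hij, map_zero]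
  have hsumf : ∑ i, f i = 1 := by
    rw [hf, ← map_sum, hsume, map_one]
  have hdimA := finrank_eq_sum_corners e (fun i => (hmine i).2.1.1) horthe hsume
  have hdimB := finrank_eq_sum_corners f (fun i => (hminf i).2.1.1) horthf hsumf
  have hcompare : ∀ ij : Fin n × Fin n,
      finrank ℂ (corner (f ij.1) (f ij.2)) ≤ finrank ℂ (corner (e ij.1) (e ij.2)) := by
    rintro ⟨i, j⟩
    by_cases hij : i = j
    · subst hij
      rw [finrank_corner_self (hmine i), finrank_corner_self (hminf i)]
    · by_cases hbot : corner (f i) (f j) = (⊥ : Submodule ℂ B)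
      · rw [hbot, finrank_bot]
        omega
      · obtain ⟨x, hxmem, hx0⟩ := (Submodule.ne_bot_iff _).mp hbot
        have huc : UConj (φ (e i)) (φ (e j)) :=
          uconj_of_corner (hminf i) (hminf j) (horthf i j hij) hxmem hx0
        obtain ⟨w, hwmem, hw⟩ := hconj _ _ huc
        have hwu := Unitary.mem_iff.mp hwmem
        have hiwj : e i * w * e j ∈ corner (e i) (e j) := by
          show e i * (e i * w * e j) * e j = e i * w * e j
          rw [show e i * (e i * w * e j) * e j = (e i * e i) * w * (e j * e j) by noncomm_ring,
            (hmine i).2.1.1, (hmine j).2.1.1]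
        have hkey : e i * w * e j = e i * w := by
          calc e i * w * e j = e i * w * (star w * e i * w) := by rw [hw]
            _ = e i * (w * star w) * e i * w := by noncomm_ring
            _ = e i * 1 * e i * w := by rw [hwu.2]
            _ = e i * w := by rw [mul_one, (hmine i).2.1.1]
        have hne0 : e i * w * e j ≠ 0 := by
          rw [hkey]
          intro h
          have h2 : e i = 0 := by
            calc e i = e i * 1 := (mul_one _).symm
              _ = e i * (w * star w) := by rw [hwu.2]
              _ = (e i * w) * star w := by rw [mul_assoc]
              _ = 0 := by rw [h, zero_mul]
          exact (hmine i).1 h2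
        have h1le : 1 ≤ finrank ℂ (corner (e i) (e j)) := by
          have hle : Submodule.span ℂ {e i * w * e j} ≤ corner (e i) (e j) := by
            rw [Submodule.span_le, Set.singleton_subset_iff]
            exact hiwj
          calc 1 = finrank ℂ (Submodule.span ℂ {e i * w * e j}) :=
                (finrank_span_singleton hne0).symm
            _ ≤ _ := Submodule.finrank_mono hle
        calc finrank ℂ (corner (f i) (f j)) ≤ 1 :=
              finrank_corner_le_one (hminf i) (hminf j)
          _ ≤ _ := h1le
  have hBA : finrank ℂ B ≤ finrank ℂ A := by
    rw [hdimA, hdimB]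
    exact Finset.sum_le_sum fun ij _ => hcompare ij
  have hinj' : Function.Injective (φ.toAlgHom.toLinearMap) := hinj
  have hAB : finrank ℂ A ≤ finrank ℂ B :=
    LinearMap.finrank_le_finrank_of_injective hinj'
  have hrange : LinearMap.range φ.toAlgHom.toLinearMap = ⊤ := by
    apply Submodule.eq_top_of_finrank_eq
    rw [LinearMap.finrank_range_of_inj hinj']
    exact le_antisymm hAB hBA
  intro b
  obtain ⟨a, ha⟩ := LinearMap.range_eq_top.mp hrange b
  exact ⟨a, ha⟩
end

section
/- Let A be a finite-dimensional C*-algebra and let C be a unital C*-subalgebra of A (a closed *-subalgebra containing the unit of A) such that: (i) every minimal projection of C is a minimal projection of A, and (ii) any two elements of C that are unitarily conjugate in A are already unitarily conjugate in C. Then C = A. -/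
set_option linter.unusedSectionVars false

section SpecAux

variable {A : Type*} [CStarAlgebra A]

private lemma aux_exists_spec_ne_zero [Nontrivial A] {z : A} (hz : IsSelfAdjoint z)
    (h0 : z ≠ 0) : ∃ t : ℝ, t ∈ spectrum ℝ z ∧ t ≠ 0 := by
  by_contra h
  push_neg at h
  have hsr : spectralRadius ℂ z = 0 := by
    refine le_antisymm ?_ zero_le
    rw [spectralRadius]
    refine iSup₂_le fun k hk => ?_
    obtain ⟨t, ht, rfl⟩ := hz.spectrumRestricts.algebraMap_image ▸ hk
    have := h t ht
    simp [this]
  rw [hz.spectralRadius_eq_nnnorm] at hsr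
  exact h0 (by simpa using hsr)

private lemma aux_spec_finite [Nontrivial A] [FiniteDimensional ℂ A] (z : A) :
    (spectrum ℝ z).Finite := by
  have : FiniteDimensional ℝ A := Module.Finite.trans ℂ A
  have hint : IsIntegral ℝ z := IsIntegral.of_finite ℝ z
  have hp : minpoly ℝ z ≠ 0 := minpoly.ne_zero hint
  refine (Polynomial.finite_setOf_isRoot hp).subset fun t ht => ?_
  have h1 := spectrum.subset_polynomial_aeval z (minpoly ℝ z) ⟨t, ht, rfl⟩
  rw [minpoly.aeval, spectrum.zero_eq] at h1
  simpa [Polynomial.IsRoot] using h1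

variable [FiniteDimensional ℂ A]

private lemma aux_corner_sa {e z : A} (he : IsMinProj e)
    (hz : IsSelfAdjoint z) (hez : e * z = z) (hze : z * e = z) :
    ∃ t : ℝ, z = (t : ℂ) • e := by
  have : Nontrivial A := ⟨e, 0, he.1⟩
  rcases eq_or_ne z 0 with rfl | h0
  · exact ⟨0, by simp⟩
  obtain ⟨l, hl, hl0⟩ := aux_exists_spec_ne_zero hz h0
  have hfin := aux_spec_finite (A := A) z
  have : Finite (spectrum ℝ z) := hfin
  have hcont : ∀ g : ℝ → ℝ, ContinuousOn g (spectrum ℝ z) := fun g => by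
    rw [continuousOn_iff_continuous_restrict]
    exact continuous_of_discreteTopology
  have key : ∀ μ : ℝ, μ ∈ spectrum ℝ z → μ ≠ 0 →
      cfc (fun t : ℝ => if t = μ then 1 else 0) z = e := by
    intro μ hμ hμ0
    set f : ℝ → ℝ := fun t => if t = μ then 1 else 0 with hf
    set q := cfc f z with hq
    have hqsa : IsSelfAdjoint q := cfc_predicate f z
    have hqq : q * q = q := by
      rw [hq, ← cfc_mul f f z (hcont f) (hcont f)]
      exact cfc_congr fun t _ => by by_cases h : t = μ <;> simp [hf, h]
    have hqz : q * z = μ • q := by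
      have h1 : cfc (fun t : ℝ => f t * t) z = q * z := by
        rw [cfc_mul f _ z (hcont f) (hcont _), cfc_id' ℝ z]
      have h2 : cfc (fun t : ℝ => f t * t) z = μ • q := by
        rw [show (fun t : ℝ => f t * t) = fun t => μ • f t from ?_,
          cfc_smul μ f z (hcont f)]
        ext t; by_cases h : t = μ <;> simp [hf, h, mul_comm]
      rw [← h1, h2]
    have hq0 : q ≠ 0 := by
      intro hq00
      have hms := cfc_map_spectrum f z hz (hcont f)
      rw [← hq, hq00, spectrum.zero_eq] at hms
      have h1 : (1 : ℝ) ∈ ({0} : Set ℝ) := by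
        rw [hms]; exact ⟨μ, hμ, by simp [hf]⟩
      simp at h1
    have hqe : q * e = q := by
      have h1 : q = μ⁻¹ • (q * z) := by
        rw [hqz, smul_smul, inv_mul_cancel₀ hμ0, one_smul]
      calc q * e = (μ⁻¹ • (q * z)) * e := by rw [← h1]
        _ = μ⁻¹ • (q * (z * e)) := by rw [smul_mul_assoc, mul_assoc]
        _ = μ⁻¹ • (q * z) := by rw [hze]
        _ = q := h1.symm
    rcases he.2.2 q ⟨hqq, hqsa.star_eq⟩ hqe with h | h
    · exact absurd h hq0
    · exact h
  have hspec : ∀ μ ∈ spectrum ℝ z, μ = 0 ∨ μ = l := by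
    intro μ hμ
    by_contra hcon
    push_neg at hcon
    have h1 := key μ hμ hcon.1
    have h2 := key l hl hl0
    have hee : cfc (fun t : ℝ => if t = l then (1:ℝ) else 0) z *
        cfc (fun t : ℝ => if t = μ then (1:ℝ) else 0) z = 0 := by
      rw [← cfc_mul _ _ z (hcont _) (hcont _)]
      have hfun : (fun t : ℝ => (if t = l then (1:ℝ) else 0) * (if t = μ then 1 else 0))
          = fun _ => (0:ℝ) := by
        ext t
        by_cases htl : t = l
        · subst htl
          have : ¬ (t = μ) := fun hh => hcon.2 (hh ▸ rfl)
          simp [this]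
        · simp [htl]
      rw [hfun]
      simp
    rw [h1, h2, he.2.1.1] at hee
    exact he.1 hee
  have he' := key l hl hl0
  refine ⟨l, ?_⟩
  have hzero : cfc (fun t : ℝ => t - l * (if t = l then 1 else 0)) z = 0 := by
    have heqon : (spectrum ℝ z).EqOn (fun t : ℝ => t - l * (if t = l then 1 else 0))
        (fun _ => (0:ℝ)) := by
      intro t ht
      rcases hspec t ht with rfl | rfl
      · simp [Ne.symm hl0]
      · simp
    rw [cfc_congr heqon]
    simp
  have hsub : cfc (fun t : ℝ => t - l * (if t = l then 1 else 0)) z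
      = z - l • e := by
    rw [cfc_sub _ _ z (hcont _) (hcont _), cfc_id' ℝ z,
      cfc_const_mul l _ z (hcont _), he']
  rw [hsub, sub_eq_zero] at hzero
  rw [hzero, Complex.coe_smul]

private lemma aux_corner {e : A} (he : IsMinProj e) (x : A) :
    ∃ c : ℂ, e * x * e = c • e := by
  set y := e * x * e with hy
  have hee := he.2.1.1
  have hey : e * y = y := by rw [hy, ← mul_assoc, ← mul_assoc, hee]
  have hye : y * e = y := by rw [hy, mul_assoc, hee]
  have hes : star e = e := he.2.1.2
  have heys : e * star y = star y := by
    rw [← hes, ← star_mul, hye]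
  have hyse : star y * e = star y := by
    rw [← hes, ← star_mul, hey]
  set z1 := (2:ℂ)⁻¹ • (y + star y) with hz1
  set z2 := (2*Complex.I)⁻¹ • (y - star y) with hz2
  have hz1sa : IsSelfAdjoint z1 := by
    rw [hz1, IsSelfAdjoint, star_smul, star_add, star_star, add_comm]
    congr 1
    simp
  have hz2sa : IsSelfAdjoint z2 := by
    rw [hz2, IsSelfAdjoint, star_smul, star_sub, star_star]
    rw [show star ((2*Complex.I)⁻¹) = -(2*Complex.I)⁻¹ by
      simp [Complex.ext_iff]]
    rw [neg_smul, ← smul_neg, neg_sub]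
  obtain ⟨t1, ht1⟩ := aux_corner_sa he hz1sa
    (by rw [hz1, mul_smul_comm, mul_add, hey, heys])
    (by rw [hz1, smul_mul_assoc, add_mul, hye, hyse])
  obtain ⟨t2, ht2⟩ := aux_corner_sa he hz2sa
    (by rw [hz2, mul_smul_comm, mul_sub, hey, heys])
    (by rw [hz2, smul_mul_assoc, sub_mul, hye, hyse])
  refine ⟨(t1 : ℂ) + Complex.I * (t2 : ℂ), ?_⟩
  have hyz : y = z1 + Complex.I • z2 := by
    rw [hz1, hz2, smul_smul]
    rw [show Complex.I * (2*Complex.I)⁻¹ = (2:ℂ)⁻¹ by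
      field_simp [Complex.I_ne_zero]]
    rw [smul_add, smul_sub]
    module
  rw [hyz, ht1, ht2, smul_smul, ← add_smul]

private lemma aux_exists_unitary (auxC : ∀ {e : A}, IsMinProj e → ∀ x : A, ∃ c : ℂ, e * x * e = c • e) {e f : A} (he : IsMinProj e) (hf : IsMinProj f)
    (hef : e * f = 0) (hfe : f * e = 0) {x : A} (hx : x ≠ 0)
    (hxef : e * x * f = x) :
    ∃ u ∈ unitary A, star u * e * u = f := by
  have hee := he.2.1.1
  have hff := hf.2.1.1
  have hse : star e = e := he.2.1.2
  have hsf : star f = f := hf.2.1.2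
  have hex : e * x = x := by
    conv_lhs => rw [← hxef]
    calc e * (e * x * f) = (e * e) * x * f := by noncomm_ring
      _ = x := by rw [hee, hxef]
  have hxf : x * f = x := by
    conv_lhs => rw [← hxef]
    calc (e * x * f) * f = e * x * (f * f) := by noncomm_ring
      _ = x := by rw [hff, hxef]
  have hxe0 : x * e = 0 := by
    calc x * e = (x * f) * e := by rw [hxf]
      _ = x * (f * e) := by rw [mul_assoc]
      _ = 0 := by rw [hfe, mul_zero]
  have hfx0 : f * x = 0 := by
    calc f * x = f * (e * x) := by rw [hex]
      _ = (f * e) * x := (mul_assoc f e x).symm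
      _ = 0 := by rw [hfe, zero_mul]
  have hsxe : star x * e = star x := by rw [← hse, ← star_mul, hex]
  have hesx : e * star x = 0 := by rw [← hse, ← star_mul, hxe0, star_zero]
  have hfsx : f * star x = star x := by rw [← hsf, ← star_mul, hxf]
  have hsxf : star x * f = 0 := by rw [← hsf, ← star_mul, hfx0, star_zero]
  have hxx0 : x * x = 0 := by
    calc x * x = x * (e * x) := by rw [hex]
      _ = (x * e) * x := (mul_assoc x e x).symm
      _ = 0 := by rw [hxe0, zero_mul]
  -- the corner scalars
  obtain ⟨c, hc⟩ := auxC hf (star x * x)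
  have hcxx : star x * x = c • f := by
    rw [← hc]
    calc star x * x = (f * star x) * (x * f) := by rw [hfsx, hxf]
      _ = f * (star x * x) * f := by noncomm_ring
  obtain ⟨d, hd⟩ := auxC he (x * star x)
  have hdxx : x * star x = d • e := by
    rw [← hd]
    calc x * star x = (e * x) * (star x * e) := by rw [hex, hsxe]
      _ = e * (x * star x) * e := by noncomm_ring
  have hcd : d = c := by
    have h1 : x * (star x * x) = (x * star x) * x := (mul_assoc x (star x) x).symm
    rw [hcxx, hdxx, mul_smul_comm, smul_mul_assoc, hxf, hex] at h1
    have h2 : (c - d) • x = 0 := by rw [sub_smul, h1, sub_self]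
    rcases smul_eq_zero.mp h2 with h | h
    · exact (sub_eq_zero.mp h).symm
    · exact absurd h hx
  rw [hcd] at hdxx
  -- c is real
  have hxx0' : star x * x ≠ 0 := by
    intro h
    exact hx (CStarRing.star_mul_self_eq_zero_iff x |>.mp h)
  have hc0 : c ≠ 0 := by
    intro h
    rw [h, zero_smul] at hcxx
    exact hxx0' hcxx
  have hcreal : (starRingEnd ℂ) c = c := by
    have h1 : ((starRingEnd ℂ) c) • f = c • f := by
      calc ((starRingEnd ℂ) c) • f = ((starRingEnd ℂ) c) • star f := by rw [hsf]
        _ = star (c • f) := by rw [star_smul]; rfl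
        _ = star (star x * x) := by rw [hcxx]
        _ = star x * x := by rw [star_mul, star_star]
        _ = c • f := hcxx
    have h2 : ((starRingEnd ℂ) c - c) • f = 0 := by rw [sub_smul, h1, sub_self]
    rcases smul_eq_zero.mp h2 with h | h
    · exact sub_eq_zero.mp h
    · exact absurd h hf.1
  set ν : ℝ := c.re with hν
  have hcν : c = (ν : ℂ) := (Complex.conj_eq_iff_re.mp hcreal).symm
  have hν0 : ν ≠ 0 := by
    intro h
    exact hc0 (by rw [hcν, h, Complex.ofReal_zero])
  -- positivity of ν
  have hνpos : 0 < ν := by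
    have hmem : ν ∈ spectrum ℝ (star x * x) := by
      rw [spectrum.mem_iff]
      intro hunit
      have hrw : (algebraMap ℝ A) ν - star x * x = ν • ((1 : A) - f) := by
        rw [Algebra.algebraMap_eq_smul_one, hcxx, hcν, Complex.coe_smul, smul_sub]
      rw [hrw] at hunit
      obtain ⟨uu, huu⟩ := hunit
      have hv1 : (ν • ((1:A) - f)) * ↑uu⁻¹ = 1 := by rw [← huu, Units.mul_inv]
      have hv2 : (↑uu⁻¹ : A) * (ν • ((1:A) - f)) = 1 := by rw [← huu, Units.inv_mul]
      set g := (1 : A) - f with hg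
      have hgg : g * g = g := by
        rw [hg, mul_sub, sub_mul, sub_mul, one_mul, mul_one, hff]
        abel_nf
        simp
      set w := ν • (↑uu⁻¹ : A) with hw
      have hgw : g * w = 1 := by
        rw [hw, mul_smul_comm, ← smul_mul_assoc, hv1]
      have hwg : w * g = 1 := by
        rw [hw, smul_mul_assoc, ← mul_smul_comm, hv2]
      have hg1 : g = 1 := by
        calc g = g * 1 := (mul_one g).symm
          _ = g * (g * w) := by rw [hgw]
          _ = (g * g) * w := (mul_assoc g g w).symm
          _ = g * w := by rw [hgg]
          _ = 1 := hgw
      exact hf.1 (sub_eq_self.mp (hg.symm.trans hg1))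
    have := spectrum_star_mul_self_nonneg ν hmem
    exact lt_of_le_of_ne this (Ne.symm hν0)
  -- the partial isometry
  set c0 : ℂ := (((Real.sqrt ν)⁻¹ : ℝ) : ℂ) with hc0def
  have hc0sq : c0 * c0 * c = 1 := by
    rw [hcν, hc0def]
    norm_cast
    rw [← mul_inv, Real.mul_self_sqrt hνpos.le]
    exact inv_mul_cancel₀ hν0
  set w := c0 • x with hwdef
  have hsw : star w = c0 • star x := by
    rw [hwdef, star_smul]
    congr 1
    rw [hc0def]
    exact Complex.conj_ofReal _
  have hsww : star w * w = f := by
    rw [hwdef, hsw, smul_mul_assoc, mul_smul_comm, hcxx, smul_smul, smul_smul, hc0sq, one_smul]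
  have hwsw : w * star w = e := by
    rw [hwdef, hsw, smul_mul_assoc, mul_smul_comm, hdxx, smul_smul, smul_smul, hc0sq, one_smul]
  have hew : e * w = w := by rw [hwdef, mul_smul_comm, hex]
  have hwf : w * f = w := by rw [hwdef, smul_mul_assoc, hxf]
  have hwe : w * e = 0 := by rw [hwdef, smul_mul_assoc, hxe0, smul_zero]
  have hfw : f * w = 0 := by rw [hwdef, mul_smul_comm, hfx0, smul_zero]
  have hswe : star w * e = star w := by rw [hsw, smul_mul_assoc, hsxe]
  have hesw : e * star w = 0 := by rw [hsw, mul_smul_comm, hesx, smul_zero]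
  have hfsw : f * star w = star w := by rw [hsw, mul_smul_comm, hfsx]
  have hswf : star w * f = 0 := by rw [hsw, smul_mul_assoc, hsxf, smul_zero]
  have hww : w * w = 0 := by
    rw [hwdef, smul_mul_assoc, mul_smul_comm, hxx0, smul_zero, smul_zero]
  have hswsw : star w * star w = 0 := by
    rw [← star_mul, hww, star_zero]
  -- the unitary
  set r := (1 : A) - e - f with hrdef
  set u := w + star w + r with hudef
  have hsu : star u = u := by
    rw [hudef, star_add, star_add, star_star, star_sub, star_sub, star_one, hse, hsf,
      ← hrdef]
    rw [add_comm (star w) w]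
  have hwr : w * r = 0 := by
    rw [hrdef]; simp [mul_sub, hwe, hwf]
  have hrw : r * w = 0 := by
    rw [hrdef]; simp [sub_mul, hew, hfw]
  have hswr : star w * r = 0 := by
    rw [hrdef]; simp [mul_sub, hswe, hswf]
  have hrsw : r * star w = 0 := by
    rw [hrdef]; simp [sub_mul, hesw, hfsw]
  have hrr : r * r = r := by
    rw [hrdef]
    simp only [mul_sub, sub_mul, mul_one, one_mul, hee, hff, hef, hfe]
    abel
  have huw : u * w = f := by
    rw [hudef, add_mul, add_mul, hww, hsww, hrw, zero_add, add_zero]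
  have husw : u * star w = e := by
    rw [hudef, add_mul, add_mul, hwsw, hswsw, hrsw, add_zero, add_zero]
  have hur : u * r = r := by
    rw [hudef, add_mul, add_mul, hwr, hswr, hrr, zero_add, zero_add]
  have huu : u * u = 1 := by
    have h1 : u * u = u * w + u * star w + u * r := by
      conv_lhs => rw [hudef]; rw [mul_add, mul_add]
    rw [h1, huw, husw, hur, hrdef]
    abel
  have hmem : u ∈ unitary A := by
    rw [Unitary.mem_iff, hsu]
    exact ⟨huu, huu⟩
  refine ⟨u, hmem, ?_⟩
  rw [hsu]
  have hue : u * e = star w := by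
    rw [hudef, add_mul, add_mul, hwe, hswe, hrdef]
    simp [sub_mul, hee, hfe]
  calc u * e * u = star w * u := by rw [hue]
    _ = star w * w + star w * star w + star w * r := by
        rw [hudef, mul_add, mul_add]
    _ = f := by rw [hsww, hswsw, hswr]; simp


end SpecAux

section Decomp

variable {A : Type*} [NormedRing A] [StarRing A] [CStarRing A] [NormedAlgebra ℂ A]
  [StarModule ℂ A] [FiniteDimensional ℂ A] (S : StarSubalgebra ℂ A)

private noncomputable def cM (p : A) : Submodule ℂ A :=
  Submodule.map ((LinearMap.mulLeft ℂ p).comp (LinearMap.mulRight ℂ p))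
    (Subalgebra.toSubmodule S.toSubalgebra)

private lemma cM_mem {p x : A} (hx : x ∈ S) : p * x * p ∈ cM S p :=
  ⟨x, by simpa using hx, (mul_assoc p x p).symm⟩

private lemma cM_elim {p y : A} (hy : y ∈ cM S p) : ∃ x ∈ S, p * x * p = y := by
  obtain ⟨x, hx, rfl⟩ := hy
  exact ⟨x, by simpa using hx, mul_assoc p x p⟩

private lemma aux_decomp : ∀ (N : ℕ) (p : A), p ∈ S → IsProj p →
    Module.finrank ℂ (cM S p) ≤ N →
    ∃ L : List A,
      (∀ e ∈ L, e ∈ S ∧ IsProj e ∧ e ≠ 0 ∧ e * p = e ∧ p * e = e ∧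
        (∀ q : A, q ∈ S → IsProj q → q * e = q → q = 0 ∨ q = e)) ∧
      L.Pairwise (fun a b => a * b = 0 ∧ b * a = 0) ∧ L.sum = p := by
  have key : ∀ (p : A), p ∈ S → IsProj p →
      ¬ (∀ q : A, q ∈ S → IsProj q → q * p = q → q = 0 ∨ q = p) →
      ∃ q : A, q ∈ S ∧ IsProj q ∧ q * p = q ∧ p * q = q ∧ q ≠ 0 ∧ q ≠ p := by
    intro p hpS hp hmin
    push_neg at hmin
    obtain ⟨q, hqS, hq, hqp, hq0, hqne⟩ := hmin
    have hpq : p * q = q := by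
      have := congrArg star hqp
      rwa [star_mul, hq.2, hp.2] at this
    exact ⟨q, hqS, hq, hqp, hpq, hq0, hqne⟩
  intro N
  induction N with
  | zero =>
    intro p hpS hp hd
    have hM : cM S p = ⊥ := Submodule.finrank_eq_zero.mp (Nat.le_zero.mp hd)
    have hp0 : p = 0 := by
      have hmem : p ∈ cM S p := by
        have := cM_mem S (p := p) S.one_mem
        simpa [hp.1] using this
      rw [hM] at hmem
      simpa using hmem
    exact ⟨[], by simp, by simp, by simp [hp0]⟩
  | succ N ih =>
    intro p hpS hp hd
    by_cases hp0 : p = 0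
    · exact ⟨[], by simp, by simp, by simp [hp0]⟩
    by_cases hmin : ∀ q : A, q ∈ S → IsProj q → q * p = q → q = 0 ∨ q = p
    · refine ⟨[p], ?_, List.pairwise_singleton _ _, by simp⟩
      intro e he
      rw [List.mem_singleton] at he
      subst he
      exact ⟨hpS, hp, hp0, hp.1, hp.1, hmin⟩
    obtain ⟨q, hqS, hq, hqp, hpq, hq0, hqne⟩ := key p hpS hp hmin
    set r := p - q with hr
    have hrS : r ∈ S := sub_mem hpS hqS
    have hqr : q * r = 0 := by rw [hr, mul_sub, hqp, hq.1, sub_self]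
    have hrq : r * q = 0 := by rw [hr, sub_mul, hpq, hq.1, sub_self]
    have hrr : IsProj r := by
      constructor
      · rw [hr, sub_mul, mul_sub, mul_sub, hp.1, hpq, hqp, hq.1]
        abel
      · rw [hr, star_sub, hp.2, hq.2]
    have hpr : p * r = r := by rw [hr, mul_sub, hp.1, hpq]
    have hrp : r * p = r := by rw [hr, sub_mul, hp.1, hqp]
    have hpMp : p ∈ cM S p := by
      have := cM_mem S (p := p) S.one_mem
      simpa [hp.1] using this
    have hlt : ∀ s : A, s ∈ S → IsProj s → s * p = s → p * s = s → s ≠ p →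
        Module.finrank ℂ (cM S s) < Module.finrank ℂ (cM S p) := by
      intro s hsS hs hsp hps hsne
      have hle : cM S s ≤ cM S p := by
        intro x hx
        obtain ⟨w, hwS, hw⟩ := cM_elim S hx
        rw [← hw]
        have h2 : s * w * s = p * (s * w * s) * p := by
          calc s * w * s = (p * s) * w * (s * p) := by rw [hps, hsp]
            _ = p * (s * w * s) * p := by noncomm_ring
        rw [h2]
        exact cM_mem S (mul_mem (mul_mem hsS hwS) hsS)
      have hne : p ∉ cM S s := by
        intro hmem
        obtain ⟨w, hwS, hw⟩ := cM_elim S hmem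
        have h1 : s * p * s = s := by rw [hsp, hs.1]
        have h2 : s * p * s = p := by
          rw [← hw]
          calc s * (s * w * s) * s = (s * s) * w * (s * s) := by noncomm_ring
            _ = s * w * s := by rw [hs.1]
        exact hsne (h1.symm.trans h2)
      exact Submodule.finrank_lt_finrank_of_lt (lt_of_le_of_ne hle (fun h => hne (h ▸ hpMp)))
    have hdq : Module.finrank ℂ (cM S q) ≤ N :=
      Nat.lt_succ_iff.mp (lt_of_lt_of_le (hlt q hqS hq hqp hpq hqne) hd)
    have hdr : Module.finrank ℂ (cM S r) ≤ N :=
      Nat.lt_succ_iff.mp (lt_of_lt_of_le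
        (hlt r hrS hrr hrp hpr (fun h => hq0 (by rw [hr] at h; exact sub_eq_self.mp h))) hd)
    obtain ⟨Lq, hLq, hLqp, hLqsum⟩ := ih q hqS hq hdq
    obtain ⟨Lr, hLr, hLrp, hLrsum⟩ := ih r hrS hrr hdr
    refine ⟨Lq ++ Lr, ?_, ?_, by rw [List.sum_append, hLqsum, hLrsum, hr]; abel⟩
    · intro e he
      rcases List.mem_append.mp he with he | he
      · obtain ⟨heS, hep, he0, heq, hqe, hemin⟩ := hLq e he
        refine ⟨heS, hep, he0, ?_, ?_, hemin⟩
        · calc e * p = (e * q) * p := by rw [heq]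
            _ = e * (q * p) := by rw [mul_assoc]
            _ = e := by rw [hqp, heq]
        · calc p * e = p * (q * e) := by rw [hqe]
            _ = (p * q) * e := by rw [mul_assoc]
            _ = e := by rw [hpq, hqe]
      · obtain ⟨heS, hep, he0, her, hre, hemin⟩ := hLr e he
        refine ⟨heS, hep, he0, ?_, ?_, hemin⟩
        · calc e * p = (e * r) * p := by rw [her]
            _ = e * (r * p) := by rw [mul_assoc]
            _ = e := by rw [hrp, her]
        · calc p * e = p * (r * e) := by rw [hre]
            _ = (p * r) * e := by rw [mul_assoc]
            _ = e := by rw [hpr, hre]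
    · rw [List.pairwise_append]
      refine ⟨hLqp, hLrp, fun e he f hf => ?_⟩
      obtain ⟨-, -, -, heq, hqe, -⟩ := hLq e he
      obtain ⟨-, -, -, hfr, hrf, -⟩ := hLr f hf
      constructor
      · calc e * f = (e * q) * (r * f) := by rw [heq, hrf]
          _ = e * (q * r) * f := by noncomm_ring
          _ = 0 := by rw [hqr]; noncomm_ring
      · calc f * e = (f * r) * (q * e) := by rw [hfr, hqe]
          _ = f * (r * q) * e := by noncomm_ring
          _ = 0 := by rw [hrq]; noncomm_ring

end Decomp

theorem stmt2 {A : Type*}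
    [NormedRing A] [StarRing A] [CStarRing A] [NormedAlgebra ℂ A] [StarModule ℂ A]
    [FiniteDimensional ℂ A]
    (S : StarSubalgebra ℂ A) (hSclosed : IsClosed (S : Set A))
    -- (i) every minimal projection of `S` is a minimal projection of `A`:
    (hmin : ∀ p : A, p ∈ S → p ≠ 0 → IsProj p →
      (∀ q : A, q ∈ S → IsProj q → q * p = q → q = 0 ∨ q = p) → IsMinProj p)
    -- (ii) elements of `S` unitarily conjugate in `A` are unitarily conjugate in `S`:
    (hconj : ∀ a b : A, a ∈ S → b ∈ S →
      (∃ u ∈ unitary A, star u * a * u = b) →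
      (∃ u ∈ unitary A, u ∈ S ∧ star u * a * u = b)) :
    S = ⊤ := by
  by_cases htriv : (1 : A) = 0
  · rw [eq_top_iff]
    rintro a -
    have ha : a = 0 := by rw [← mul_one a, htriv, mul_zero]
    rw [ha]; exact zero_mem S
  haveI : Nontrivial A := nontrivial_of_ne 1 0 htriv
  haveI : CompleteSpace A := FiniteDimensional.complete ℂ A
  letI : CStarAlgebra A := { }
  obtain ⟨L, hL, hLpair, hLsum⟩ :=
    aux_decomp S (Module.finrank ℂ (cM S 1)) 1 S.one_mem ⟨one_mul 1, star_one A⟩ le_rfl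
  have hminA : ∀ e ∈ L, IsMinProj e := fun e he => by
    obtain ⟨heS, hep, he0, -, -, hemin⟩ := hL e he
    exact hmin e heS he0 hep hemin
  rw [eq_top_iff]
  rintro a -
  have hpairs : ∀ e ∈ L, ∀ f ∈ L, e * a * f ∈ S := by
    intro e he f hf
    by_cases hef : e = f
    · subst hef
      obtain ⟨c, hc⟩ := aux_corner (hminA e he) a
      rw [hc]
      exact SMulMemClass.smul_mem c (hL e he).1
    · have horth : e * f = 0 ∧ f * e = 0 :=
        by
          haveI : Std.Symm (fun a b : A => a * b = 0 ∧ b * a = 0) := ⟨fun _ _ h => ⟨h.2, h.1⟩⟩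
          exact hLpair.forall he hf hef
      by_cases hx : e * a * f = 0
      · rw [hx]; exact zero_mem S
      obtain ⟨heS, hepj, -, -, -, -⟩ := hL e he
      obtain ⟨hfS, hfpj, -, -, -, -⟩ := hL f hf
      have heA := hminA e he
      have hfA := hminA f hf
      have hxef : e * (e * a * f) * f = e * a * f := by
        calc e * (e * a * f) * f = (e * e) * a * (f * f) := by noncomm_ring
          _ = e * a * f := by rw [hepj.1, hfpj.1]
      obtain ⟨u, huU, hueu⟩ :=
        aux_exists_unitary (fun {e} hme x => aux_corner hme x) heA hfA horth.1 horth.2 hx hxef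
      obtain ⟨g, hgU, hgS, hgeg⟩ := hconj e f heS hfS ⟨u, huU, hueu⟩
      obtain ⟨c2, hc2⟩ := aux_corner heA (a * (f * star g))
      have hkey : (e * a * f) * (star g * e) = c2 • e := by
        rw [← hc2]; noncomm_ring
      have hfss : (star g * e) * (e * g) = f := by
        calc (star g * e) * (e * g) = (star g * (e * e)) * g := by noncomm_ring
          _ = star g * e * g := by rw [hepj.1]
          _ = f := hgeg
      have hxf2 : (e * a * f) * f = e * a * f := by
        calc (e * a * f) * f = e * a * (f * f) := by noncomm_ring
          _ = e * a * f := by rw [hfpj.1]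
      have heg : e * (e * g) = e * g := by
        calc e * (e * g) = (e * e) * g := (mul_assoc e e g).symm
          _ = e * g := by rw [hepj.1]
      have hxS : e * a * f = c2 • (e * g) := by
        calc e * a * f = (e * a * f) * f := hxf2.symm
          _ = (e * a * f) * ((star g * e) * (e * g)) := by rw [hfss]
          _ = ((e * a * f) * (star g * e)) * (e * g) := by noncomm_ring
          _ = (c2 • e) * (e * g) := by rw [hkey]
          _ = c2 • (e * (e * g)) := by rw [smul_mul_assoc]
          _ = c2 • (e * g) := by rw [heg]
      rw [hxS]
      exact SMulMemClass.smul_mem c2 (mul_mem heS hgS)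
  have hsum1 : ∀ (l2 : List A) (e : A), (∀ f ∈ l2, e * a * f ∈ S) → (e * a) * l2.sum ∈ S := by
    intro l2
    induction l2 with
    | nil => intro e _; simpa using zero_mem S
    | cons f t iht =>
      intro e h
      rw [List.sum_cons, mul_add]
      exact add_mem (h f List.mem_cons_self)
        (iht e fun g hg => h g (List.mem_cons_of_mem f hg))
  have hsum2 : ∀ (l1 : List A), (∀ e ∈ l1, ∀ f ∈ L, e * a * f ∈ S) → l1.sum * a * L.sum ∈ S := by
    intro l1
    induction l1 with
    | nil => intro _; simpa using zero_mem S
    | cons e t iht =>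
      intro h
      rw [List.sum_cons, add_mul, add_mul]
      exact add_mem (hsum1 L e (h e List.mem_cons_self))
        (iht fun g hg f hf => h g (List.mem_cons_of_mem e hg) f hf)
  have hfin := hsum2 L hpairs
  rw [hLsum] at hfin
  simpa using hfin
end

section
/- There exist unital injective *-homomorphisms φ, ψ : ℂ × ℂ × ℂ × M₂(ℂ) → M₃(ℂ) × M₂(ℂ), both of which map minimal projections to minimal projections, such that no *-automorphism θ of M₃(ℂ) × M₂(ℂ) satisfies θ ∘ φ = ψ. -/
open Matrix

section Aux

variable {A B : Type*}

lemma isProj_map_equiv [Ring A] [StarRing A] [Ring B] [StarRing B]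
    (f : A ≃+* B) (hf : ∀ x, f (star x) = star (f x)) {p : A} (hp : IsProj p) :
    IsProj (f p) :=
  ⟨by rw [← _root_.map_mul, hp.1], by rw [← hf, hp.2]⟩

lemma isMinProj_map_equiv [Ring A] [StarRing A] [Ring B] [StarRing B]
    (f : A ≃+* B) (hf : ∀ x, f (star x) = star (f x)) {p : A} (hp : IsMinProj p) :
    IsMinProj (f p) := by
  obtain ⟨h0, hproj, hmin⟩ := hp
  refine ⟨fun h => h0 (f.injective (by simpa using h)), isProj_map_equiv f hf hproj, ?_⟩
  intro q hq hqp
  have hf' : ∀ y, f.symm (star y) = star (f.symm y) := by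
    intro y; apply f.injective; rw [hf, f.apply_symm_apply, f.apply_symm_apply]
  have h2 : f.symm q * p = f.symm q := by
    have := congrArg f.symm hqp
    rwa [_root_.map_mul, f.symm_apply_apply] at this
  rcases hmin (f.symm q) (isProj_map_equiv f.symm hf' hq) h2 with h | h
  · left; have := congrArg f h; simpa using this
  · right; have := congrArg f h; simpa using this

lemma isMinProj_prod_left [Ring A] [StarRing A] [Ring B] [StarRing B] {p : A}
    (hp : IsMinProj p) : IsMinProj ((p, 0) : A × B) := by
  obtain ⟨h0, ⟨hp2, hps⟩, hmin⟩ := hp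
  refine ⟨fun h => h0 (congrArg Prod.fst h), ⟨?_, ?_⟩, ?_⟩
  · exact Prod.ext (by simpa using hp2) (by simp)
  · exact Prod.ext (by simpa using hps) (by simp)
  · rintro ⟨q1, q2⟩ ⟨hq2, hqs⟩ hqp
    have hq20 : q2 = 0 := by
      have := congrArg Prod.snd hqp; simpa using this.symm
    subst hq20
    rcases hmin q1 ⟨congrArg Prod.fst hq2, congrArg Prod.fst hqs⟩
        (congrArg Prod.fst hqp) with h | h
    · left; simp [h]
    · right; simp [h]

lemma isMinProj_prod_right [Ring A] [StarRing A] [Ring B] [StarRing B] {p : B}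
    (hp : IsMinProj p) : IsMinProj ((0, p) : A × B) := by
  obtain ⟨h0, ⟨hp2, hps⟩, hmin⟩ := hp
  refine ⟨fun h => h0 (congrArg Prod.snd h), ⟨?_, ?_⟩, ?_⟩
  · exact Prod.ext (by simp) (by simpa using hp2)
  · exact Prod.ext (by simp) (by simpa using hps)
  · rintro ⟨q1, q2⟩ ⟨hq2, hqs⟩ hqp
    have hq10 : q1 = 0 := by
      have := congrArg Prod.fst hqp; simpa using this.symm
    subst hq10
    rcases hmin q2 ⟨congrArg Prod.snd hq2, congrArg Prod.snd hqs⟩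
        (congrArg Prod.snd hqp) with h | h
    · left; simp [h]
    · right; simp [h]

lemma isMinProj_single {n : Type*} [Fintype n] [DecidableEq n] (i : n) :
    IsMinProj (Matrix.single i i (1 : ℂ)) := by
  refine ⟨?_, ⟨by simp, ?_⟩, ?_⟩
  · intro h
    have := congrFun (congrFun h i) i
    simp at this
  · ext a b
    simp [conjTranspose_apply, Matrix.single, and_comm]
  · rintro q ⟨hq2, hqs⟩ hqp
    have hcol : ∀ a b, b ≠ i → q a b = 0 := by
      intro a b hb
      have := congrFun (congrFun hqp a) b
      rw [Matrix.mul_single_apply_of_ne (c := (1:ℂ)) i i a b hb] at this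
      exact this.symm
    have hrow : ∀ a b, a ≠ i → q a b = 0 := by
      intro a b ha
      have h1 : q a b = star (q b a) := (congrFun (congrFun hqs a) b).symm
      rw [h1, hcol b a ha, star_zero]
    have hqe : q = Matrix.single i i (q i i) := by
      ext a b
      by_cases ha : a = i
      · by_cases hb : b = i
        · subst ha; subst hb; simp
        · rw [hcol a b hb]; subst ha; simp [Matrix.single, Ne.symm hb]
      · rw [hrow a b ha]; simp [Matrix.single, Ne.symm ha]
    have hc : q i i * q i i = q i i := by
      have := congrFun (congrFun hq2 i) i
      rw [hqe] at this
      simpa using this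
    have hc' : q i i * (q i i - 1) = 0 := by rw [mul_sub, mul_one, hc, sub_self]
    rcases mul_eq_zero.mp hc' with h | h
    · left; rw [hqe, h]; simp
    · right; rw [hqe, sub_eq_zero.mp h]

lemma isMinProj_fromBlocks_tl {m n : Type*} [Fintype m] [Fintype n]
    [DecidableEq m] [DecidableEq n] {p : Matrix m m ℂ} (hp : IsMinProj p) :
    IsMinProj (fromBlocks p 0 0 0 : Matrix (m ⊕ n) (m ⊕ n) ℂ) := by
  obtain ⟨h0, ⟨hp2, hps⟩, hmin⟩ := hp
  refine ⟨?_, ⟨?_, ?_⟩, ?_⟩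
  · intro h
    apply h0
    ext a b
    exact congrFun (congrFun h (Sum.inl a)) (Sum.inl b)
  · rw [fromBlocks_multiply]; simp [hp2]
  · rw [Matrix.star_eq_conjTranspose, fromBlocks_conjTranspose]
    simp [← Matrix.star_eq_conjTranspose, hps]
  · intro q hq hqp
    rw [← fromBlocks_toBlocks q] at hq hqp ⊢
    set A := q.toBlocks₁₁
    set B := q.toBlocks₁₂
    set C := q.toBlocks₂₁
    set D := q.toBlocks₂₂
    rw [fromBlocks_multiply] at hqp
    simp only [Matrix.mul_zero, Matrix.zero_mul, add_zero, zero_add] at hqp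
    rw [fromBlocks_inj] at hqp
    obtain ⟨hA, hB, hC, hD⟩ := hqp
    obtain ⟨hq2, hqs⟩ := hq
    rw [Matrix.star_eq_conjTranspose, fromBlocks_conjTranspose, fromBlocks_inj] at hqs
    obtain ⟨hsA, hsC, hsB, hsD⟩ := hqs
    have hB0 : B = 0 := hB.symm
    have hD0 : D = 0 := hD.symm
    have hC0 : C = 0 := by
      rw [← hsB, hB0]; simp
    rw [hB0, hC0, hD0] at hq2 ⊢
    rw [fromBlocks_multiply] at hq2
    simp only [Matrix.mul_zero, Matrix.zero_mul, add_zero, zero_add] at hq2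
    rw [fromBlocks_inj] at hq2
    have hAs : star A = A := hsA
    rcases hmin A ⟨hq2.1, hAs⟩ hA with h | h
    · left; rw [h]; simp
    · right; rw [h]

lemma isMinProj_fromBlocks_br {m n : Type*} [Fintype m] [Fintype n]
    [DecidableEq m] [DecidableEq n] {p : Matrix n n ℂ} (hp : IsMinProj p) :
    IsMinProj (fromBlocks 0 0 0 p : Matrix (m ⊕ n) (m ⊕ n) ℂ) := by
  obtain ⟨h0, ⟨hp2, hps⟩, hmin⟩ := hp
  refine ⟨?_, ⟨?_, ?_⟩, ?_⟩
  · intro h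
    apply h0
    ext a b
    exact congrFun (congrFun h (Sum.inr a)) (Sum.inr b)
  · rw [fromBlocks_multiply]; simp [hp2]
  · rw [Matrix.star_eq_conjTranspose, fromBlocks_conjTranspose]
    simp [← Matrix.star_eq_conjTranspose, hps]
  · intro q hq hqp
    rw [← fromBlocks_toBlocks q] at hq hqp ⊢
    set A := q.toBlocks₁₁
    set B := q.toBlocks₁₂
    set C := q.toBlocks₂₁
    set D := q.toBlocks₂₂
    rw [fromBlocks_multiply] at hqp
    simp only [Matrix.mul_zero, Matrix.zero_mul, add_zero, zero_add] at hqp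
    rw [fromBlocks_inj] at hqp
    obtain ⟨hA, hB, hC, hD⟩ := hqp
    obtain ⟨hq2, hqs⟩ := hq
    rw [Matrix.star_eq_conjTranspose, fromBlocks_conjTranspose, fromBlocks_inj] at hqs
    obtain ⟨hsA, hsC, hsB, hsD⟩ := hqs
    have hA0 : A = 0 := hA.symm
    have hC0 : C = 0 := hC.symm
    have hB0 : B = 0 := by
      rw [← hsC, hC0]; simp
    rw [hA0, hB0, hC0] at hq2 ⊢
    rw [fromBlocks_multiply] at hq2
    simp only [Matrix.mul_zero, Matrix.zero_mul, add_zero, zero_add] at hq2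
    rw [fromBlocks_inj] at hq2
    have hDs : star D = D := hsD
    rcases hmin D ⟨hq2.2.2.2, hDs⟩ hD with h | h
    · left; rw [h]; simp
    · right; rw [h]


abbrev M2 := Matrix (Fin 2) (Fin 2) ℂ
abbrev M3 := Matrix (Fin 3) (Fin 3) ℂ

lemma min_prod_char [Ring A] [StarRing A] [Ring B] [StarRing B] {p : A × B}
    (hp : IsMinProj p) :
    (IsMinProj p.1 ∧ p.2 = 0) ∨ (p.1 = 0 ∧ IsMinProj p.2) := by
  obtain ⟨h0, ⟨hp2, hps⟩, hmin⟩ := hp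
  obtain ⟨a, b⟩ := p
  have ha2 : a * a = a := congrArg Prod.fst hp2
  have hb2 : b * b = b := congrArg Prod.snd hp2
  have hsa : star a = a := congrArg Prod.fst hps
  have hsb : star b = b := congrArg Prod.snd hps
  rcases hmin (a, 0) ⟨Prod.ext ha2 (mul_zero 0), Prod.ext hsa (star_zero B)⟩
      (Prod.ext ha2 (zero_mul b)) with h | h
  · have ha0 : a = 0 := congrArg Prod.fst h
    subst ha0
    right
    refine ⟨rfl, ?_, ⟨hb2, hsb⟩, ?_⟩
    · intro hb0; exact h0 (Prod.ext rfl hb0)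
    · intro q hq hqb
      rcases hmin (0, q) ⟨Prod.ext (mul_zero 0) hq.1, Prod.ext (star_zero A) hq.2⟩
          (Prod.ext (zero_mul 0) hqb) with h | h
      · left; exact congrArg Prod.snd h
      · right; exact congrArg Prod.snd h
  · have hb0 : (0 : B) = b := congrArg Prod.snd h
    left
    refine ⟨⟨?_, ⟨ha2, hsa⟩, ?_⟩, hb0.symm⟩
    · intro ha0; exact h0 (Prod.ext ha0 hb0.symm)
    · intro q hq hqa
      rcases hmin (q, 0) ⟨Prod.ext hq.1 (mul_zero 0), Prod.ext hq.2 (star_zero B)⟩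
          (Prod.ext hqa (zero_mul b)) with h | h
      · left; exact congrArg Prod.fst h
      · right; exact congrArg Prod.fst h

lemma min_complex {a : ℂ} (ha : IsMinProj a) : a = 1 := by
  obtain ⟨h0, ⟨ha2, -⟩, -⟩ := ha
  field_simp at ha2
  tauto

lemma src_char {p : ℂ × ℂ × ℂ × M2} (hp : IsMinProj p) :
    p = (1,0,0,0) ∨ p = (0,1,0,0) ∨ p = (0,0,1,0) ∨
      (p.1 = 0 ∧ p.2.1 = 0 ∧ p.2.2.1 = 0 ∧ IsMinProj p.2.2.2) := by
  obtain ⟨a, q⟩ := p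
  rcases min_prod_char hp with ⟨h1, h2⟩ | ⟨h1, h2⟩
  · left
    rw [Prod.ext_iff]
    exact ⟨min_complex h1, h2⟩
  · obtain ⟨b, q⟩ := q
    rcases min_prod_char h2 with ⟨h3, h4⟩ | ⟨h3, h4⟩
    · right; left
      rw [Prod.ext_iff, Prod.ext_iff]
      exact ⟨h1, min_complex h3, h4⟩
    · obtain ⟨c, M⟩ := q
      rcases min_prod_char h4 with ⟨h5, h6⟩ | ⟨h5, h6⟩
      · right; right; left
        rw [Prod.ext_iff, Prod.ext_iff, Prod.ext_iff]
        exact ⟨h1, h3, min_complex h5, h6⟩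
      · right; right; right
        exact ⟨h1, h3, h5, h6⟩


lemma vec3_eval (v : Fin 3 → ℂ) : v = ![v 0, v 1, v 2] := by
  funext i; fin_cases i <;> rfl

lemma vec2_eval (v : Fin 2 → ℂ) : v = ![v 0, v 1] := by
  funext i; fin_cases i <;> rfl

lemma vec1_eval (v : Fin 1 → ℂ) : v = ![v 0] := by
  funext i; fin_cases i <;> rfl

def e3 : Matrix (Fin 1 ⊕ Fin 2) (Fin 1 ⊕ Fin 2) ℂ ≃ₐ[ℂ] M3 :=
  Matrix.reindexAlgEquiv ℂ ℂ finSumFinEquiv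

lemma e3_star (M : Matrix (Fin 1 ⊕ Fin 2) (Fin 1 ⊕ Fin 2) ℂ) :
    e3 (star M) = star (e3 M) := by
  simp [e3, Matrix.star_eq_conjTranspose, conjTranspose_reindex]

def phi0 : (ℂ × ℂ × ℂ × M2) →⋆ₐ[ℂ] (M3 × M2) where
  toFun x := (Matrix.diagonal ![x.1, x.2.1, x.2.2.1], x.2.2.2)
  map_one' := by
    refine Prod.ext ?_ rfl
    show Matrix.diagonal ![(1:ℂ), 1, 1] = 1
    rw [← Matrix.diagonal_one]
    congr 1
    funext i; fin_cases i <;> rfl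
  map_mul' x y := by
    refine Prod.ext ?_ rfl
    show Matrix.diagonal _ = Matrix.diagonal _ * Matrix.diagonal _
    rw [Matrix.diagonal_mul_diagonal]
    congr 1
    funext i; fin_cases i <;> rfl
  map_zero' := by
    refine Prod.ext ?_ rfl
    show Matrix.diagonal ![(0:ℂ), 0, 0] = 0
    rw [← Matrix.diagonal_zero]
    congr 1
    funext i; fin_cases i <;> rfl
  map_add' x y := by
    refine Prod.ext ?_ rfl
    show Matrix.diagonal _ = Matrix.diagonal _ + Matrix.diagonal _
    rw [Matrix.diagonal_add]
    congr 1
    funext i; fin_cases i <;> rfl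
  commutes' r := by
    refine Prod.ext ?_ rfl
    show Matrix.diagonal ![r, r, r] = algebraMap ℂ M3 r
    rw [Matrix.algebraMap_eq_diagonal]
    congr 1
    funext i; fin_cases i <;> rfl
  map_star' x := by
    refine Prod.ext ?_ rfl
    show Matrix.diagonal _ = star (Matrix.diagonal _)
    rw [Matrix.star_eq_conjTranspose, Matrix.diagonal_conjTranspose]
    congr 1
    funext i; fin_cases i <;> rfl

def psi0 : (ℂ × ℂ × ℂ × M2) →⋆ₐ[ℂ] (M3 × M2) where
  toFun x := (e3 (fromBlocks (Matrix.diagonal ![x.1]) 0 0 x.2.2.2),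
      Matrix.diagonal ![x.2.1, x.2.2.1])
  map_one' := by
    refine Prod.ext ?_ ?_
    · show e3 (fromBlocks (Matrix.diagonal ![(1:ℂ)]) 0 0 1) = 1
      have h1 : Matrix.diagonal ![(1:ℂ)] = 1 := by
        rw [← Matrix.diagonal_one]; congr 1; funext i; fin_cases i <;> rfl
      rw [h1, fromBlocks_one, _root_.map_one]
    · show Matrix.diagonal ![(1:ℂ), 1] = 1
      rw [← Matrix.diagonal_one]; congr 1; funext i; fin_cases i <;> rfl
  map_mul' x y := by
    refine Prod.ext ?_ ?_
    · show e3 _ = e3 _ * e3 _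
      rw [← _root_.map_mul]
      congr 1
      rw [fromBlocks_multiply]
      simp only [Matrix.mul_zero, Matrix.zero_mul, add_zero, zero_add,
        Matrix.diagonal_mul_diagonal]
      rw [fromBlocks_inj]
      refine ⟨?_, rfl, rfl, rfl⟩
      congr 1
      funext i; fin_cases i <;> rfl
    · show Matrix.diagonal _ = Matrix.diagonal _ * Matrix.diagonal _
      rw [Matrix.diagonal_mul_diagonal]
      congr 1
      funext i; fin_cases i <;> rfl
  map_zero' := by
    refine Prod.ext ?_ ?_
    · show e3 (fromBlocks (Matrix.diagonal ![(0:ℂ)]) 0 0 0) = 0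
      have h1 : Matrix.diagonal ![(0:ℂ)] = 0 := by
        rw [← Matrix.diagonal_zero]; congr 1; funext i; fin_cases i <;> rfl
      rw [h1, fromBlocks_zero, map_zero]
    · show Matrix.diagonal ![(0:ℂ), 0] = 0
      rw [← Matrix.diagonal_zero]; congr 1; funext i; fin_cases i <;> rfl
  map_add' x y := by
    refine Prod.ext ?_ ?_
    · show e3 _ = e3 _ + e3 _
      rw [← map_add]
      congr 1
      rw [fromBlocks_add, fromBlocks_inj]
      refine ⟨?_, by simp, by simp, rfl⟩
      rw [Matrix.diagonal_add]
      congr 1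
      funext i; fin_cases i <;> rfl
    · show Matrix.diagonal _ = Matrix.diagonal _ + Matrix.diagonal _
      rw [Matrix.diagonal_add]
      congr 1
      funext i; fin_cases i <;> rfl
  commutes' r := by
    refine Prod.ext ?_ ?_
    · show e3 (fromBlocks (Matrix.diagonal ![r]) 0 0 (algebraMap ℂ M2 r)) = algebraMap ℂ M3 r
      have h1 : fromBlocks (Matrix.diagonal ![r]) 0 0 (algebraMap ℂ M2 r)
          = algebraMap ℂ (Matrix (Fin 1 ⊕ Fin 2) (Fin 1 ⊕ Fin 2) ℂ) r := by
        rw [Matrix.algebraMap_eq_diagonal, Matrix.algebraMap_eq_diagonal, fromBlocks_diagonal]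
        have hd : (![r] ⊕ᵥ (algebraMap ℂ (Fin 2 → ℂ)) r) = algebraMap ℂ (Fin 1 ⊕ Fin 2 → ℂ) r := by
          funext i
          rcases i with a | a <;> simp [Pi.algebraMap_apply]
        rw [hd]
      rw [h1]
      exact e3.commutes r
    · show Matrix.diagonal ![r, r] = algebraMap ℂ M2 r
      rw [Matrix.algebraMap_eq_diagonal]
      congr 1
      funext i; fin_cases i <;> rfl
  map_star' x := by
    refine Prod.ext ?_ ?_
    · show e3 _ = star (e3 _)
      rw [← e3_star]
      congr 1
      rw [Matrix.star_eq_conjTranspose, fromBlocks_conjTranspose]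
      simp only [Matrix.conjTranspose_zero, Matrix.diagonal_conjTranspose]
      rw [fromBlocks_inj]
      refine ⟨?_, rfl, rfl, rfl⟩
      congr 1
      funext i; fin_cases i <;> rfl
    · show Matrix.diagonal _ = star (Matrix.diagonal _)
      rw [Matrix.star_eq_conjTranspose, Matrix.diagonal_conjTranspose]
      congr 1
      funext i; fin_cases i <;> rfl


lemma diag100 : Matrix.diagonal ![(1:ℂ),0,0] = Matrix.single (0 : Fin 3) 0 1 := by
  ext i j; fin_cases i <;> fin_cases j <;> simp [Matrix.single]

lemma diag010 : Matrix.diagonal ![(0:ℂ),1,0] = Matrix.single (1 : Fin 3) 1 1 := by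
  ext i j; fin_cases i <;> fin_cases j <;> simp [Matrix.single]

lemma diag001 : Matrix.diagonal ![(0:ℂ),0,1] = Matrix.single (2 : Fin 3) 2 1 := by
  ext i j; fin_cases i <;> fin_cases j <;> simp [Matrix.single]

lemma diag10 : Matrix.diagonal ![(1:ℂ),0] = Matrix.single (0 : Fin 2) 0 1 := by
  ext i j; fin_cases i <;> fin_cases j <;> simp [Matrix.single]

lemma diag01 : Matrix.diagonal ![(0:ℂ),1] = Matrix.single (1 : Fin 2) 1 1 := by
  ext i j; fin_cases i <;> fin_cases j <;> simp [Matrix.single]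

lemma diag000 : Matrix.diagonal ![(0:ℂ),0,0] = 0 := by
  rw [← Matrix.diagonal_zero]; congr 1; funext i; fin_cases i <;> rfl

lemma diag00 : Matrix.diagonal ![(0:ℂ),0] = 0 := by
  rw [← Matrix.diagonal_zero]; congr 1; funext i; fin_cases i <;> rfl

lemma diag0 : Matrix.diagonal ![(0:ℂ)] = 0 := by
  rw [← Matrix.diagonal_zero]; congr 1; funext i; fin_cases i <;> rfl

lemma diag1min : IsMinProj (Matrix.diagonal ![(1:ℂ)]) := by
  have : Matrix.diagonal ![(1:ℂ)] = Matrix.single (0 : Fin 1) 0 1 := by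
    ext i j; fin_cases i <;> fin_cases j <;> simp [Matrix.single]
  rw [this]
  exact isMinProj_single 0

lemma e3_min {M : Matrix (Fin 1 ⊕ Fin 2) (Fin 1 ⊕ Fin 2) ℂ} (hM : IsMinProj M) :
    IsMinProj (e3 M) :=
  isMinProj_map_equiv e3.toRingEquiv e3_star hM

lemma E_val : e3 (fromBlocks (Matrix.diagonal ![(1:ℂ)]) 0 0 (0 : M2))
    = Matrix.single (0 : Fin 3) 0 1 := by
  ext i j
  fin_cases i <;> fin_cases j <;>
    simp [e3, Matrix.reindexAlgEquiv_apply, Matrix.reindex_apply, Matrix.submatrix_apply,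
      fromBlocks, Matrix.single, finSumFinEquiv, Matrix.diagonal] <;> rfl

end Aux

theorem stmt6 :
    ∃ φ ψ : (ℂ × ℂ × ℂ × Matrix (Fin 2) (Fin 2) ℂ) →⋆ₐ[ℂ]
        (Matrix (Fin 3) (Fin 3) ℂ × Matrix (Fin 2) (Fin 2) ℂ),
      Function.Injective φ ∧ Function.Injective ψ ∧
      (∀ p, IsMinProj p → IsMinProj (φ p)) ∧
      (∀ p, IsMinProj p → IsMinProj (ψ p)) ∧
      ¬ ∃ θ : (Matrix (Fin 3) (Fin 3) ℂ × Matrix (Fin 2) (Fin 2) ℂ) ≃⋆ₐ[ℂ]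
          (Matrix (Fin 3) (Fin 3) ℂ × Matrix (Fin 2) (Fin 2) ℂ),
        ∀ x, θ (φ x) = ψ x := by
  refine ⟨phi0, psi0, ?_, ?_, ?_, ?_, ?_⟩
  · -- phi0 injective
    intro x y h
    have h1 : Matrix.diagonal ![x.1, x.2.1, x.2.2.1] = Matrix.diagonal ![y.1, y.2.1, y.2.2.1] :=
      congrArg Prod.fst h
    have hv := Matrix.diagonal_injective h1
    have h2 := congrArg Prod.snd h
    exact Prod.ext (congrFun hv 0) (Prod.ext (congrFun hv 1) (Prod.ext (congrFun hv 2) h2))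
  · -- psi0 injective
    intro x y h
    have h1 : e3 (fromBlocks (Matrix.diagonal ![x.1]) 0 0 x.2.2.2)
        = e3 (fromBlocks (Matrix.diagonal ![y.1]) 0 0 y.2.2.2) := congrArg Prod.fst h
    have h1' := e3.injective h1
    rw [fromBlocks_inj] at h1'
    have ha := congrFun (Matrix.diagonal_injective h1'.1) 0
    have hM := h1'.2.2.2
    have h2 : Matrix.diagonal ![x.2.1, x.2.2.1] = Matrix.diagonal ![y.2.1, y.2.2.1] :=
      congrArg Prod.snd h
    have hv := Matrix.diagonal_injective h2
    exact Prod.ext ha (Prod.ext (congrFun hv 0) (Prod.ext (congrFun hv 1) hM))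
  · -- phi0 min
    intro p hp
    rcases src_char hp with h | h | h | ⟨h1, h2, h3, h4⟩
    · rw [h]
      have hv : (phi0 ((1:ℂ),(0:ℂ),(0:ℂ),(0:M2)) : M3 × M2)
          = (Matrix.single (0 : Fin 3) 0 1, 0) := Prod.ext diag100 rfl
      rw [hv]
      exact isMinProj_prod_left (isMinProj_single 0)
    · rw [h]
      have hv : (phi0 ((0:ℂ),(1:ℂ),(0:ℂ),(0:M2)) : M3 × M2)
          = (Matrix.single (1 : Fin 3) 1 1, 0) := Prod.ext diag010 rfl
      rw [hv]
      exact isMinProj_prod_left (isMinProj_single 1)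
    · rw [h]
      have hv : (phi0 ((0:ℂ),(0:ℂ),(1:ℂ),(0:M2)) : M3 × M2)
          = (Matrix.single (2 : Fin 3) 2 1, 0) := Prod.ext diag001 rfl
      rw [hv]
      exact isMinProj_prod_left (isMinProj_single 2)
    · obtain ⟨a, b, c, M⟩ := p
      dsimp only at h1 h2 h3 h4
      subst h1; subst h2; subst h3
      have hv : (phi0 ((0:ℂ),(0:ℂ),(0:ℂ),M) : M3 × M2) = (0, M) := Prod.ext diag000 rfl
      rw [hv]
      exact isMinProj_prod_right h4
  · -- psi0 min
    intro p hp
    rcases src_char hp with h | h | h | ⟨h1, h2, h3, h4⟩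
    · rw [h]
      have hv : (psi0 ((1:ℂ),(0:ℂ),(0:ℂ),(0:M2)) : M3 × M2)
          = (e3 (fromBlocks (Matrix.diagonal ![(1:ℂ)]) 0 0 (0:M2)), 0) := Prod.ext rfl diag00
      rw [hv]
      exact isMinProj_prod_left (e3_min (isMinProj_fromBlocks_tl diag1min))
    · rw [h]
      have hz : fromBlocks (Matrix.diagonal ![(0:ℂ)]) 0 0 (0:M2) = 0 := by
        rw [diag0]; exact fromBlocks_zero
      have hv : (psi0 ((0:ℂ),(1:ℂ),(0:ℂ),(0:M2)) : M3 × M2)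
          = (0, Matrix.single (0 : Fin 2) 0 1) :=
        Prod.ext (by show e3 _ = 0; rw [hz, map_zero]) diag10
      rw [hv]
      exact isMinProj_prod_right (isMinProj_single 0)
    · rw [h]
      have hz : fromBlocks (Matrix.diagonal ![(0:ℂ)]) 0 0 (0:M2) = 0 := by
        rw [diag0]; exact fromBlocks_zero
      have hv : (psi0 ((0:ℂ),(0:ℂ),(1:ℂ),(0:M2)) : M3 × M2)
          = (0, Matrix.single (1 : Fin 2) 1 1) :=
        Prod.ext (by show e3 _ = 0; rw [hz, map_zero]) diag01
      rw [hv]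
      exact isMinProj_prod_right (isMinProj_single 1)
    · obtain ⟨a, b, c, M⟩ := p
      dsimp only at h1 h2 h3 h4
      subst h1; subst h2; subst h3
      have hz : fromBlocks (Matrix.diagonal ![(0:ℂ)]) 0 0 M = fromBlocks 0 0 0 M := by
        rw [diag0]
      have hv : (psi0 ((0:ℂ),(0:ℂ),(0:ℂ),M) : M3 × M2)
          = (e3 (fromBlocks 0 0 0 M), 0) := Prod.ext (by show e3 _ = _; rw [hz]) diag00
      rw [hv]
      exact isMinProj_prod_left (e3_min (isMinProj_fromBlocks_br h4))
  · -- no intertwining automorphism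
    rintro ⟨θ, hθ⟩
    set x₀ : ℂ × ℂ × ℂ × M2 := ((1:ℂ), (1:ℂ), (1:ℂ), (0:M2)) with hx₀
    have hφ : (phi0 x₀ : M3 × M2) = (1, 0) := by
      refine Prod.ext ?_ rfl
      show Matrix.diagonal ![(1:ℂ),1,1] = 1
      rw [← Matrix.diagonal_one]
      congr 1
      funext i; fin_cases i <;> rfl
    have hψ1 : (psi0 x₀ : M3 × M2).1 = Matrix.single (0 : Fin 3) 0 1 := E_val
    have hcen : ∀ y : M3 × M2, psi0 x₀ * y = y * psi0 x₀ := by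
      intro y
      rw [← hθ x₀, ← θ.apply_symm_apply y, ← _root_.map_mul, ← _root_.map_mul]
      congr 1
      rw [hφ]
      set z := θ.symm y
      exact Prod.ext (by show 1 * z.1 = z.1 * 1; rw [one_mul, mul_one])
        (by show (0:M2) * z.2 = z.2 * 0; rw [zero_mul, mul_zero])
    have h1 := congrArg Prod.fst (hcen (Matrix.single (0 : Fin 3) 1 1, 0))
    simp only [Prod.fst_mul] at h1
    rw [hψ1, Matrix.single_mul_single_same,
      Matrix.single_mul_single_of_ne (i := (0 : Fin 3)) (j := (1 : Fin 3)) (k := (0 : Fin 3)) (c := (1:ℂ)) (h := by decide) (d := (1:ℂ))] at h1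
    have := congrFun (congrFun h1 0) 1
    simp at this
end

section
/- There exist unital injective *-homomorphisms φ, ψ : ℂ × ℂ → ℂ × M₂(ℂ), both of which reflect unitary conjugacy, such that no *-automorphism θ of ℂ × M₂(ℂ) satisfies θ ∘ φ = ψ. -/
noncomputable def myhom (f : ℂ × ℂ → Fin 2 → ℂ)
    (hone : f 1 = 1) (hmul : ∀ x y, f x * f y = f (x*y)) (hadd : ∀ x y, f x + f y = f (x+y))
    (hzero : f 0 = 0) (hc : ∀ c : ℂ, f (algebraMap ℂ (ℂ × ℂ) c) = fun _ => c)
    (hstar : ∀ x, star (f x) = f (star x)) :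
    (ℂ × ℂ) →⋆ₐ[ℂ] (ℂ × Matrix (Fin 2) (Fin 2) ℂ) where
  toFun x := (x.1, Matrix.diagonal (f x))
  map_one' := Prod.ext rfl (by
    show Matrix.diagonal (f 1) = 1; rw [hone]; exact Matrix.diagonal_one)
  map_mul' x y := Prod.ext rfl (by
    show Matrix.diagonal (f (x*y)) = Matrix.diagonal (f x) * Matrix.diagonal (f y)
    rw [Matrix.diagonal_mul_diagonal]
    exact congrArg Matrix.diagonal (hmul x y).symm)
  map_zero' := Prod.ext rfl (by
    show Matrix.diagonal (f 0) = 0; rw [hzero]; exact Matrix.diagonal_zero)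
  map_add' x y := Prod.ext rfl (by
    show Matrix.diagonal (f (x+y)) = Matrix.diagonal (f x) + Matrix.diagonal (f y)
    rw [Matrix.diagonal_add]
    exact congrArg Matrix.diagonal (hadd x y).symm)
  commutes' c := Prod.ext rfl (by
    show Matrix.diagonal (f (algebraMap ℂ (ℂ × ℂ) c)) = algebraMap ℂ (Matrix (Fin 2) (Fin 2) ℂ) c
    rw [hc, Matrix.algebraMap_eq_diagonal]; rfl)
  map_star' x := Prod.ext rfl (by
    show Matrix.diagonal (f (star x)) = star (Matrix.diagonal (f x))
    rw [Matrix.star_eq_conjTranspose, Matrix.diagonal_conjTranspose]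
    exact congrArg Matrix.diagonal (hstar x).symm)
lemma trace_conj {u m m' : Matrix (Fin 2) (Fin 2) ℂ} (h : u * star u = 1)
    (he : star u * m * u = m') : m'.trace = m.trace := by
  rw [← he, Matrix.trace_mul_comm, ← mul_assoc, h, one_mul]

noncomputable def φ' := myhom (fun x => fun _ => x.2) rfl (fun _ _ => rfl) (fun _ _ => rfl)
  rfl (fun _ => rfl) (fun _ => rfl)

noncomputable def ψ' := myhom (fun x => ![x.1, x.2])
  (by funext i; fin_cases i <;> rfl)
  (fun x y => by funext i; fin_cases i <;> rfl)
  (fun x y => by funext i; fin_cases i <;> rfl)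
  (by funext i; fin_cases i <;> rfl)
  (fun c => by funext i; fin_cases i <;> rfl)
  (fun x => by funext i; fin_cases i <;> rfl)


theorem stmt7 :
    ∃ φ ψ : (ℂ × ℂ) →⋆ₐ[ℂ] (ℂ × Matrix (Fin 2) (Fin 2) ℂ),
      Function.Injective φ ∧ Function.Injective ψ ∧
      (∀ a b, UConj (φ a) (φ b) → UConj a b) ∧
      (∀ a b, UConj (ψ a) (ψ b) → UConj a b) ∧
      ¬ ∃ θ : (ℂ × Matrix (Fin 2) (Fin 2) ℂ) ≃⋆ₐ[ℂ] (ℂ × Matrix (Fin 2) (Fin 2) ℂ),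
        ∀ x, θ (φ x) = ψ x := by
  refine ⟨φ', ψ', ?_, ?_, ?_, ?_, ?_⟩
  · intro x y h
    have h1 : x.1 = y.1 := congrArg (fun p : ℂ × Matrix (Fin 2) (Fin 2) ℂ => p.1) h
    have h2 : Matrix.diagonal (fun _ => x.2) = Matrix.diagonal (fun _ => y.2) :=
      congrArg (fun p : ℂ × Matrix (Fin 2) (Fin 2) ℂ => p.2) h
    have h2' : x.2 = y.2 := congrFun (Matrix.diagonal_injective h2) 0
    exact Prod.ext h1 h2'
  · intro x y h
    have h1 : x.1 = y.1 := congrArg (fun p : ℂ × Matrix (Fin 2) (Fin 2) ℂ => p.1) h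
    have h2 : Matrix.diagonal ![x.1, x.2] = Matrix.diagonal ![y.1, y.2] :=
      congrArg (fun p : ℂ × Matrix (Fin 2) (Fin 2) ℂ => p.2) h
    have h2' : x.2 = y.2 := congrFun (Matrix.diagonal_injective h2) 1
    exact Prod.ext h1 h2'
  · intro a b ⟨u, hu, he⟩
    have hUl : star u.1 * u.1 = 1 := congrArg Prod.fst (Unitary.mem_iff.mp hu).1
    have hUr : u.2 * star u.2 = 1 := congrArg Prod.snd (Unitary.mem_iff.mp hu).2
    have e1 : star u.1 * a.1 * u.1 = b.1 := congrArg Prod.fst he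
    have e2 : star u.2 * Matrix.diagonal (fun _ => a.2) * u.2 =
        Matrix.diagonal (fun _ => b.2) := congrArg Prod.snd he
    have h1 : a.1 = b.1 := by
      rw [← e1, show star u.1 * a.1 * u.1 = a.1 * (star u.1 * u.1) from by ring, hUl, mul_one]
    have ht := trace_conj hUr e2
    simp only [Matrix.trace_diagonal, Fin.sum_univ_two] at ht
    have h2 : a.2 = b.2 := by linear_combination -ht/2
    have hab : a = b := Prod.ext h1 h2
    exact ⟨1, one_mem _, by simp [hab]⟩
  · intro a b ⟨u, hu, he⟩
    have hUr : u.2 * star u.2 = 1 := congrArg Prod.snd (Unitary.mem_iff.mp hu).2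
    have hUl : star u.1 * u.1 = 1 := congrArg Prod.fst (Unitary.mem_iff.mp hu).1
    have e1 : star u.1 * a.1 * u.1 = b.1 := congrArg Prod.fst he
    have e2 : star u.2 * Matrix.diagonal ![a.1, a.2] * u.2 =
        Matrix.diagonal ![b.1, b.2] := congrArg Prod.snd he
    have h1 : a.1 = b.1 := by
      rw [← e1, show star u.1 * a.1 * u.1 = a.1 * (star u.1 * u.1) from by ring, hUl, mul_one]
    have ht := trace_conj hUr e2
    simp only [Matrix.trace_diagonal, Fin.sum_univ_two] at ht
    simp only [Matrix.cons_val_zero, Matrix.cons_val_one, Matrix.head_cons] at ht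
    have h2 : a.2 = b.2 := by linear_combination -ht - h1
    have hab : a = b := Prod.ext h1 h2
    exact ⟨1, one_mem _, by simp [hab]⟩
  · rintro ⟨θ, hθ⟩
    set w : ℂ × Matrix (Fin 2) (Fin 2) ℂ := (0, !![0,1;0,0]) with hw
    set z := θ.symm w with hz
    have hcent : φ' (1,0) * z = z * φ' (1,0) := by
      refine Prod.ext ?_ ?_
      · show (1:ℂ) * z.1 = z.1 * 1; rw [one_mul, mul_one]
      · show Matrix.diagonal (fun _ => (0:ℂ)) * z.2 = z.2 * Matrix.diagonal (fun _ => (0:ℂ))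
        simp
    have key : ψ' (1,0) * w = w * ψ' (1,0) := by
      have : θ (φ' (1,0) * z) = θ (z * φ' (1,0)) := congrArg θ hcent
      rwa [map_mul, map_mul, hθ, hz, StarAlgEquiv.apply_symm_apply] at this
    have key2 : Matrix.diagonal ![(1:ℂ),0] * !![0,1;0,0] =
        !![0,1;0,0] * Matrix.diagonal ![(1:ℂ),0] :=
      congrArg (fun p : ℂ × Matrix (Fin 2) (Fin 2) ℂ => p.2) key
    have key3 := Matrix.ext_iff.mpr key2 0 1
    simp [Matrix.mul_apply, Fin.sum_univ_two, Matrix.diagonal] at key3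
end
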